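/- arXiv:1803.03550 — 7 statements merged into one kernel-verified Lean document; each statement's English description precedes it below -/
import Mathlib

section
/- In the counting direction of the Hamiltonian-cycle reduction: if a polygonal closed curve Q with vertices on a set S of n segments (with only proper pairwise intersections and no endpoint incidences) visits both endpoints of every segment and returns to its start, then Q has at least 3 vertices lying on each segment of S; consequently Q has at least 3n + 1 vertices in total (counting the repeated start/end vertex twice). -/
open Set
open scoped Classical

abbrev E2 := EuclideanSpace ℝ (Fin 2)

/-- A closed polygonal walk with `m + 1` vertices `v 0, …, v m` (the common
start/end vertex counted twice), starting and ending at `P`, each of whose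
edges lies inside a single segment of the family, and which visits both
endpoints of every segment. -/
def IsSegWalk (n : ℕ) (a b : Fin n → E2) (P : E2) (m : ℕ)
    (v : Fin (m + 1) → E2) : Prop :=
  v 0 = P ∧ v (Fin.last m) = P ∧
  (∀ i : Fin m,
    ∃ k, segment ℝ (v i.castSucc) (v i.succ) ⊆ segment ℝ (a k) (b k)) ∧
  (∀ k, a k ∈ range v ∧ b k ∈ range v)

/-!
An edge of `Q` that has an endpoint of the segment `s` as one of its ends cannot lie in any other
segment, because endpoints avoid the other segments; so it lies in `s`, and the sets of such edges
are disjoint for distinct segments. Read `Q` cyclically: each occurrence of an endpoint of `s` makes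
both the edge leaving it and the edge entering it such an edge, and for the two distinct endpoints
of `s` this already gives three distinct edges once `Q` has at least three edges, which holds since
`Q` visits the `2n ≥ 4` distinct endpoints. The initial vertices of these three edges lie on `s`,
and summing over the segments, `Q` has at least `3n` edges.
-/

open Function
open scoped Finset

lemma Fin.sub_one_ne_self {m : ℕ} [NeZero m] (hm : 2 ≤ m) (t : Fin m) : t - 1 ≠ t := by
  rw [Ne, sub_eq_self, Fin.ext_iff, Fin.val_one', Fin.val_zero, Nat.mod_eq_of_lt hm]
  exact one_ne_zero

lemma Fin.sub_one_sub_one_ne_self {m : ℕ} [NeZero m] (hm : 3 ≤ m) (t : Fin m) :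
    t - 1 - 1 ≠ t := by
  rw [Ne, sub_sub, sub_eq_self, Fin.ext_iff, Fin.val_add, Fin.val_one', Fin.val_zero,
    Nat.mod_eq_of_lt (by omega : 1 < m), Nat.mod_eq_of_lt hm]
  exact two_ne_zero

lemma card_le_card_of_injective_of_forall_mem_range {α β γ : Type*} [Fintype α] [Fintype β]
    {f : α → γ} (hf : Injective f) {g : β → γ} (h : ∀ x, f x ∈ range g) :
    Fintype.card α ≤ Fintype.card β := by
  choose s hs using h
  exact Fintype.card_le_of_injective s (Injective.of_comp (f := g) (by rwa [comp_def, funext hs]))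

section ClosedWalk

variable {α : Type*} {m : ℕ} [NeZero m] {v : Fin (m + 1) → α}

lemma apply_succ_eq_apply_castSucc_add_one (hv : v 0 = v (Fin.last m)) (t : Fin m) :
    v t.succ = v (t + 1).castSucc := by
  obtain ⟨m, rfl⟩ := Nat.exists_eq_succ_of_ne_zero (NeZero.ne m)
  by_cases ht : t = Fin.last m
  · rw [ht, Fin.succ_last, Fin.last_add_one, Fin.castSucc_zero, hv]
  · congr 1
    ext
    rw [Fin.val_succ, Fin.val_castSucc, Fin.val_add_one, if_neg ht]

lemma mem_range_castSucc_of_mem_range (hv : v 0 = v (Fin.last m)) {x : α} (hx : x ∈ range v) :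
    x ∈ range fun t : Fin m => v t.castSucc := by
  obtain ⟨i, rfl⟩ := hx
  induction i using Fin.lastCases with
  | last => exact ⟨0, by simp only [Fin.castSucc_zero', hv]⟩
  | cast t => exact ⟨t, rfl⟩

end ClosedWalk

section SegmentFamily

variable {ι E : Type*} {a b : ι → E}

def endpoints (a b : ι → E) (k : ι) : Set E := {a k, b k}

section Edges

variable {m : ℕ} [NeZero m] {w : Fin m → E}

/-- `w` lists the vertices of a closed walk: addition in `Fin m` wraps around, so its edges are
`[w t, w (t + 1)]` for all `t : Fin m`, the last one returning to `w 0`. -/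
noncomputable def touchingEdges (a b : ι → E) (w : Fin m → E) (k : ι) : Finset (Fin m) :=
  {t | w t ∈ endpoints a b k ∨ w (t + 1) ∈ endpoints a b k}

lemma mem_touchingEdges_of_mem_endpoints {k : ι} {t : Fin m} (h : w t ∈ endpoints a b k) :
    t ∈ touchingEdges a b w k :=
  Finset.mem_filter.2 ⟨Finset.mem_univ t, Or.inl h⟩

lemma sub_one_mem_touchingEdges_of_mem_endpoints {k : ι} {t : Fin m}
    (h : w t ∈ endpoints a b k) : t - 1 ∈ touchingEdges a b w k :=
  Finset.mem_filter.2 ⟨Finset.mem_univ _, Or.inr (by rwa [sub_add_cancel])⟩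

lemma three_le_card_touchingEdges (hm : 3 ≤ m) {k : ι} (hab : a k ≠ b k) (ha : a k ∈ range w)
    (hb : b k ∈ range w) : 3 ≤ #(touchingEdges a b w k) := by
  obtain ⟨s, hs⟩ := ha
  obtain ⟨t, ht⟩ := hb
  have hst : s ≠ t := by rintro rfl; exact hab (hs.symm.trans ht)
  have hs' : w s ∈ endpoints a b k := Or.inl hs
  have ht' : w t ∈ endpoints a b k := Or.inr ht
  have hs1 := Fin.sub_one_ne_self (by omega) s
  apply Finset.two_lt_card.2
  by_cases hts : t = s - 1
  · exact ⟨s, mem_touchingEdges_of_mem_endpoints hs', s - 1,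
      sub_one_mem_touchingEdges_of_mem_endpoints hs', s - 1 - 1,
      hts ▸ sub_one_mem_touchingEdges_of_mem_endpoints ht', hs1.symm,
      (Fin.sub_one_sub_one_ne_self hm s).symm, (Fin.sub_one_ne_self (by omega) _).symm⟩
  · exact ⟨s, mem_touchingEdges_of_mem_endpoints hs', s - 1,
      sub_one_mem_touchingEdges_of_mem_endpoints hs', t, mem_touchingEdges_of_mem_endpoints ht',
      hs1.symm, hst, Ne.symm hts⟩

end Edges

variable [AddCommGroup E] [Module ℝ E]

def NoEndpointOnOtherSegment (a b : ι → E) : Prop :=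
  ∀ i j, i ≠ j → a i ∉ segment ℝ (a j) (b j) ∧ b i ∉ segment ℝ (a j) (b j)

lemma eq_of_mem_endpoints_of_mem_segment (hend : NoEndpointOnOtherSegment a b) {k k' : ι} {x : E}
    (hx : x ∈ endpoints a b k) (hx' : x ∈ segment ℝ (a k') (b k')) :
    k = k' := by
  by_contra hne
  rcases hx with rfl | rfl
  exacts [(hend k k' hne).1 hx', (hend k k' hne).2 hx']

lemma NoEndpointOnOtherSegment.injective_sumElim (hend : NoEndpointOnOtherSegment a b)
    (hnd : ∀ i, a i ≠ b i) :
    Injective (Sum.elim a b) := by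
  have key : ∀ {k k'} {x : E}, x ∈ endpoints a b k → x ∈ endpoints a b k' → k = k' :=
    fun hx hx' => eq_of_mem_endpoints_of_mem_segment hend hx (by
      rcases hx' with rfl | rfl
      exacts [left_mem_segment ℝ _ _, right_mem_segment ℝ _ _])
  rintro (i | i) (j | j) h <;>
    simp only [Sum.elim_inl, Sum.elim_inr, Sum.inl.injEq, Sum.inr.injEq, reduceCtorEq] at h ⊢
  · exact key (Or.inl rfl) (Or.inl h)
  · obtain rfl := key (Or.inl rfl) (Or.inr h)
    exact hnd _ h
  · obtain rfl := key (Or.inl rfl) (Or.inr h.symm)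
    exact hnd _ h.symm
  · exact key (Or.inr rfl) (Or.inr h)

variable {m : ℕ} [NeZero m] {w : Fin m → E}

def EdgesOnSegments (a b : ι → E) (w : Fin m → E) : Prop :=
  ∀ t, ∃ k, segment ℝ (w t) (w (t + 1)) ⊆ segment ℝ (a k) (b k)

lemma eq_of_mem_touchingEdges (hend : NoEndpointOnOtherSegment a b) {k k' : ι} {t : Fin m}
    (ht : t ∈ touchingEdges a b w k)
    (hsub : segment ℝ (w t) (w (t + 1)) ⊆ segment ℝ (a k') (b k')) : k = k' := by
  rcases (Finset.mem_filter.1 ht).2 with h | h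
  exacts [eq_of_mem_endpoints_of_mem_segment hend h (hsub (left_mem_segment ℝ _ _)),
    eq_of_mem_endpoints_of_mem_segment hend h (hsub (right_mem_segment ℝ _ _))]

lemma segment_subset_of_mem_touchingEdges (hend : NoEndpointOnOtherSegment a b)
    (hedge : EdgesOnSegments a b w) {k : ι} {t : Fin m} (ht : t ∈ touchingEdges a b w k) :
    segment ℝ (w t) (w (t + 1)) ⊆ segment ℝ (a k) (b k) := by
  obtain ⟨k', hk'⟩ := hedge t
  rwa [eq_of_mem_touchingEdges hend ht hk']

lemma pairwiseDisjoint_touchingEdges (hend : NoEndpointOnOtherSegment a b)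
    (hedge : EdgesOnSegments a b w) :
    (Set.univ : Set ι).PairwiseDisjoint (touchingEdges a b w) := by
  intro k _ k' _ hne
  rw [Function.onFun, Finset.disjoint_left]
  intro t ht ht'
  obtain ⟨k'', hk''⟩ := hedge t
  exact hne ((eq_of_mem_touchingEdges hend ht hk'').trans
    (eq_of_mem_touchingEdges hend ht' hk'').symm)

lemma sum_card_touchingEdges_le [Fintype ι] (hend : NoEndpointOnOtherSegment a b)
    (hedge : EdgesOnSegments a b w) : ∑ k, #(touchingEdges a b w k) ≤ m := by
  rw [← Finset.card_biUnion (by simpa using pairwiseDisjoint_touchingEdges hend hedge)]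
  exact (Finset.card_le_univ _).trans_eq (Fintype.card_fin m)

lemma card_touchingEdges_le_card_filter_mem_segment (hend : NoEndpointOnOtherSegment a b)
    {v : Fin (m + 1) → E} (hedge : EdgesOnSegments a b fun t => v t.castSucc) (k : ι) :
    #(touchingEdges a b (fun t => v t.castSucc) k) ≤ #{i | v i ∈ segment ℝ (a k) (b k)} :=
  Finset.card_le_card_of_injOn Fin.castSucc
    (fun _ ht => by
      simpa using segment_subset_of_mem_touchingEdges hend hedge ht (left_mem_segment ℝ _ _))
    (Fin.castSucc_injective m).injOn

end SegmentFamily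

theorem stmt_8_general (n : ℕ) (hn : 2 ≤ n) (a b : Fin n → E2)
    (hnd : ∀ i, a i ≠ b i)
    (hend : ∀ i j, i ≠ j → a i ∉ segment ℝ (a j) (b j) ∧
      b i ∉ segment ℝ (a j) (b j))
    (P : E2)
    (m : ℕ) (v : Fin (m + 1) → E2) (hwalk : IsSegWalk n a b P m v) :
    (∀ k, 3 ≤ (Finset.univ.filter
      (fun i : Fin (m + 1) => v i ∈ segment ℝ (a k) (b k))).card) ∧
    3 * n + 1 ≤ m + 1 := by
  obtain ⟨hv0, hvlast, hedge, hmem⟩ := hwalk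
  have hclosed : v 0 = v (Fin.last m) := hv0.trans hvlast.symm
  have hendpoints : n + n ≤ m + 1 := by
    simpa using card_le_card_of_injective_of_forall_mem_range
      (NoEndpointOnOtherSegment.injective_sumElim hend hnd) (g := v)
      (Sum.forall.2 ⟨fun k => (hmem k).1, fun k => (hmem k).2⟩)
  have hm : 3 ≤ m := by omega
  have : NeZero m := ⟨by omega⟩
  set w : Fin m → E2 := fun t => v t.castSucc
  have hwedge : EdgesOnSegments a b w := fun t => by
    simpa only [w, ← apply_succ_eq_apply_castSucc_add_one hclosed] using hedge t
  have hcard (k : Fin n) : 3 ≤ #(touchingEdges a b w k) :=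
    three_le_card_touchingEdges hm (hnd k) (mem_range_castSucc_of_mem_range hclosed (hmem k).1)
      (mem_range_castSucc_of_mem_range hclosed (hmem k).2)
  refine ⟨fun k => (hcard k).trans (card_touchingEdges_le_card_filter_mem_segment hend hwedge k),
    ?_⟩
  have hsum := (Finset.sum_le_sum fun k _ => hcard k).trans (sum_card_touchingEdges_le hend hwedge)
  simp only [Finset.sum_const, Finset.card_univ, Fintype.card_fin, smul_eq_mul] at hsum
  omega

/-- Counting direction of the Hamiltonian-cycle reduction: a closed polygonal
walk on `n` segments (all pairwise intersections proper crossings, no endpoint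
incidences) visiting both endpoints of every segment has at least `3` vertices
on each segment, and hence at least `3n + 1` vertices in total (the repeated
start/end vertex counted twice). -/
theorem stmt_8 (n : ℕ) (hn : 2 ≤ n) (a b : Fin n → E2)
    (hnd : ∀ i, a i ≠ b i)
    (hproper : ∀ i j, i ≠ j → ∀ x, x ∈ segment ℝ (a i) (b i) →
      x ∈ segment ℝ (a j) (b j) →
      x ∈ openSegment ℝ (a i) (b i) ∧ x ∈ openSegment ℝ (a j) (b j))
    (hend : ∀ i j, i ≠ j → a i ∉ segment ℝ (a j) (b j) ∧
      b i ∉ segment ℝ (a j) (b j))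
    (P : E2) (i₀ : Fin n) (hP : P = a i₀)
    (m : ℕ) (v : Fin (m + 1) → E2) (hwalk : IsSegWalk n a b P m v) :
    (∀ k, 3 ≤ (Finset.univ.filter
      (fun i : Fin (m + 1) => v i ∈ segment ℝ (a k) (b k))).card) ∧
    3 * n + 1 ≤ m + 1 :=
  stmt_8_general n hn a b hnd hend P m v hwalk
end

section
/- Monotonicity of reachability: with ρ(k, i, t) defined as the predicate that there exists a subsequence simplification of ⟨p₁,…,p_i⟩ with exactly k links whose Fréchet distance to the subcurve P[0,t] is at most ε, it holds that ρ(k, i, t) is true if and only if there exist h with 0 < h < i and s with 0 ≤ s ≤ t such that ρ(k−1, h, s) is true and the segment from p_h to p_i has Fréchet distance at most ε to the subcurve P[s, t]. -/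
open Set

/-- A reparametrization: a continuous, monotone nondecreasing map of `[0,1]`
onto `[0,1]`. -/
def IsRepar (α : ℝ → ℝ) : Prop :=
  ContinuousOn α (Icc 0 1) ∧ MonotoneOn α (Icc 0 1) ∧ α '' Icc 0 1 = Icc 0 1

/-- The Fréchet distance between two curves parametrized over `[0,1]`:
the infimum over pairs of reparametrizations of the sup-distance. -/
noncomputable def frechetDist (f g : ℝ → E2) : ℝ :=
  sInf {r : ℝ | 0 ≤ r ∧ ∃ α β : ℝ → ℝ, IsRepar α ∧ IsRepar β ∧
    ∀ t ∈ Icc (0:ℝ) 1, ‖f (α t) - g (β t)‖ ≤ r}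

/-- The constant-speed parametrization of the segment from `a` to `b`. -/
noncomputable def segCurve (a b : E2) : ℝ → E2 := fun u => a + u • (b - a)

/-- The piecewise-linear curve through `p 0, p 1, …`, parametrized so that
vertex `p k` is reached at time `k`. -/
noncomputable def polyParam (p : ℕ → E2) (t : ℝ) : E2 :=
  p ⌊t⌋₊ + (t - (⌊t⌋₊ : ℝ)) • (p (⌊t⌋₊ + 1) - p ⌊t⌋₊)

/-- The subcurve of the polyline between parameters `s` and `t`,
reparametrized over `[0,1]`. -/
noncomputable def subcurve (p : ℕ → E2) (s t : ℝ) : ℝ → E2 :=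
  fun u => polyParam p (s + u * (t - s))

/-- The polygonal curve on the subsequence `p (j 0), …, p (j k)` of vertices
(a simplification with `k` links), reparametrized over `[0,1]`. -/
noncomputable def simplCurve (p : ℕ → E2) (j : ℕ → ℕ) (k : ℕ) : ℝ → E2 :=
  fun u => polyParam (fun m => p (j (min m k))) (u * k)

/-- `rho ε p k i t`: the point at parameter `t` of the polyline `p` can be
reached by a simplification of `⟨p 0, …, p i⟩` with exactly `k` links, i.e.
there is a subsequence from `p 0` to `p i` with `k` links whose Fréchet
distance to the subcurve `P[0,t]` is at most `ε`. -/
def rho (ε : ℝ) (p : ℕ → E2) (k i : ℕ) (t : ℝ) : Prop :=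
  ∃ j : ℕ → ℕ, StrictMonoOn j (Iic k) ∧ j 0 = 0 ∧ j k = i ∧
    frechetDist (simplCurve p j k) (subcurve p 0 t) ≤ ε

/-!
A matching of the `(k+1)`-link simplification with `P[0,t]` can be cut at the moment the
simplification passes its `k`-th vertex, and matchings of the two resulting pieces glue back
together; so the equivalence holds for matchings of every width `r > ε`. Since the infimum
defining the Fréchet distance need not be attained, one more step is needed: the Fréchet
distances to `P[0,s]` and `P[s,t]` depend continuously on `s`, so by compactness of `[0,t]` a
single split point serves for `ε` itself.
-/

lemma add_mul_sub_mem_Icc {c d u : ℝ} (hcd : c ≤ d) (hu : u ∈ Icc (0:ℝ) 1) :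
    c + u * (d - c) ∈ Icc c d := by
  constructor <;> nlinarith [hu.1, hu.2]

namespace IsRepar

variable {α : ℝ → ℝ}

lemma mapsTo (hα : IsRepar α) : MapsTo α (Icc 0 1) (Icc 0 1) :=
  fun _ hx => hα.2.2 ▸ mem_image_of_mem α hx

lemma map_zero (hα : IsRepar α) : α 0 = 0 := by
  obtain ⟨x, hx, hx0⟩ : (0:ℝ) ∈ α '' Icc 0 1 := by rw [hα.2.2]; simp
  exact le_antisymm ((hα.2.1 (left_mem_Icc.2 zero_le_one) hx hx.1).trans_eq hx0)
    (hα.mapsTo (left_mem_Icc.2 zero_le_one)).1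

lemma map_one (hα : IsRepar α) : α 1 = 1 := by
  obtain ⟨x, hx, hx1⟩ : (1:ℝ) ∈ α '' Icc 0 1 := by rw [hα.2.2]; simp
  exact le_antisymm (hα.mapsTo (right_mem_Icc.2 zero_le_one)).2
    (hx1.symm.trans_le (hα.2.1 hx (right_mem_Icc.2 zero_le_one) hx.2))

end IsRepar

lemma isRepar_iff {α : ℝ → ℝ} :
    IsRepar α ↔ ContinuousOn α (Icc 0 1) ∧ MonotoneOn α (Icc 0 1) ∧ α 0 = 0 ∧ α 1 = 1 := by
  refine ⟨fun h => ⟨h.1, h.2.1, h.map_zero, h.map_one⟩, fun ⟨hc, hm, h0, h1⟩ => ⟨hc, hm, ?_⟩⟩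
  refine (image_subset_iff.2 fun x hx => ?_).antisymm ?_
  · exact ⟨h0 ▸ hm (by simp) hx hx.1, h1 ▸ hm hx (by simp) hx.2⟩
  · simpa [h0, h1] using intermediate_value_Icc zero_le_one hc

lemma isRepar_id : IsRepar id :=
  isRepar_iff.2 ⟨continuousOn_id, monotoneOn_id, rfl, rfl⟩

lemma isRepar_normalize {φ : ℝ → ℝ} (hc : ContinuousOn φ (Icc 0 1))
    (hm : MonotoneOn φ (Icc 0 1)) (hlt : φ 0 < φ 1) :
    IsRepar fun u => (φ u - φ 0) / (φ 1 - φ 0) := by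
  have hpos : 0 < φ 1 - φ 0 := sub_pos.2 hlt
  refine isRepar_iff.2 ⟨(hc.sub continuousOn_const).div_const _, ?_, by simp, div_self hpos.ne'⟩
  exact fun x hx y hy hxy =>
    div_le_div_of_nonneg_right (sub_le_sub_right (hm hx hy hxy) _) hpos.le

/-- `α'` is `α` restricted to `[c, d]`, with domain and range rescaled to `[0,1]`. -/
lemma IsRepar.exists_restrict {α : ℝ → ℝ} (hα : IsRepar α) {c d : ℝ} (hc : c ∈ Icc (0:ℝ) 1)
    (hd : d ∈ Icc (0:ℝ) 1) (hcd : c ≤ d) :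
    ∃ α', IsRepar α' ∧ ∀ u ∈ Icc (0:ℝ) 1, α c + α' u * (α d - α c) = α (c + u * (d - c)) := by
  have hmaps : MapsTo (fun u => c + u * (d - c)) (Icc 0 1) (Icc 0 1) := fun u hu =>
    Icc_subset_Icc hc.1 hd.2 (add_mul_sub_mem_Icc hcd hu)
  rcases (hα.2.1 hc hd hcd).eq_or_lt with heq | hlt
  · refine ⟨id, isRepar_id, fun u hu => ?_⟩
    have hmem := add_mul_sub_mem_Icc hcd hu
    have h₁ := hα.2.1 hc (hmaps hu) hmem.1
    have h₂ := hα.2.1 (hmaps hu) hd hmem.2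
    simp only [id, heq, sub_self, mul_zero, add_zero]
    linarith
  · have hφc : ContinuousOn (fun u => α (c + u * (d - c))) (Icc 0 1) :=
      hα.1.comp (by fun_prop) hmaps
    have hφm : MonotoneOn (fun u => α (c + u * (d - c))) (Icc 0 1) :=
      hα.2.1.comp (fun x _ y _ hxy => by gcongr) hmaps
    refine ⟨_, isRepar_normalize hφc hφm (by simpa using hlt), fun u _ => ?_⟩
    simp only [zero_mul, add_zero, one_mul, add_sub_cancel]
    field_simp
    ring

section Matching

variable {E : Type*} [SeminormedAddCommGroup E]

/-- `frechetDist f g` is the infimum of the `r ≥ 0` with `MatchableWithin f g r`. -/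
def MatchableWithin (f g : ℝ → E) (r : ℝ) : Prop :=
  ∃ α β : ℝ → ℝ, IsRepar α ∧ IsRepar β ∧ ∀ u ∈ Icc (0:ℝ) 1, ‖f (α u) - g (β u)‖ ≤ r

def subcurveOf (f : ℝ → E) (a b : ℝ) : ℝ → E := fun u => f (a + u * (b - a))

/-- Runs `α₁` on `[0, 1/2]` rescaled into `[0, a]`, then `α₂` on `[1/2, 1]` rescaled into
`[a, 1]`; clamping with `min`/`max` avoids a case split. -/
def concatRepar (a : ℝ) (α₁ α₂ : ℝ → ℝ) (v : ℝ) : ℝ :=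
  α₁ (min (2 * v) 1) * a + α₂ (max (2 * v - 1) 0) * (1 - a)

variable {f f' g g' : ℝ → E} {r : ℝ}

lemma MatchableWithin.nonneg (h : MatchableWithin f g r) : 0 ≤ r := by
  obtain ⟨α, β, -, -, hm⟩ := h
  exact (norm_nonneg _).trans (hm 0 (left_mem_Icc.2 zero_le_one))

lemma matchableWithin_congr (hf : EqOn f f' (Icc 0 1)) (hg : EqOn g g' (Icc 0 1)) :
    MatchableWithin f g r ↔ MatchableWithin f' g' r := by
  refine exists₂_congr fun α β => and_congr_right fun hα => and_congr_right fun hβ =>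
    forall₂_congr fun u hu => ?_
  rw [hf (hα.mapsTo hu), hg (hβ.mapsTo hu)]

lemma MatchableWithin.of_dist_le (h : MatchableWithin f g r) {η : ℝ}
    (hη : ∀ u ∈ Icc (0:ℝ) 1, ‖g u - g' u‖ ≤ η) : MatchableWithin f g' (r + η) := by
  obtain ⟨α, β, hα, hβ, hm⟩ := h
  refine ⟨α, β, hα, hβ, fun u hu => ?_⟩
  calc ‖f (α u) - g' (β u)‖ ≤ ‖f (α u) - g (β u)‖ + ‖g (β u) - g' (β u)‖ :=
        norm_sub_le_norm_sub_add_norm_sub _ _ _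
    _ ≤ r + η := add_le_add (hm u hu) (hη _ (hβ.mapsTo hu))

lemma matchableWithin_of_continuousOn (hf : ContinuousOn f (Icc 0 1))
    (hg : ContinuousOn g (Icc 0 1)) : ∃ r, MatchableWithin f g r := by
  obtain ⟨r, hr⟩ := isCompact_Icc.exists_bound_of_continuousOn (hf.sub hg)
  exact ⟨r, id, id, isRepar_id, isRepar_id, hr⟩

lemma matchableWithin_subcurveOf {α β : ℝ → ℝ} (hα : IsRepar α) (hβ : IsRepar β)
    (hm : ∀ u ∈ Icc (0:ℝ) 1, ‖f (α u) - g (β u)‖ ≤ r) {c d : ℝ} (hc : c ∈ Icc (0:ℝ) 1)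
    (hd : d ∈ Icc (0:ℝ) 1) (hcd : c ≤ d) :
    MatchableWithin (subcurveOf f (α c) (α d)) (subcurveOf g (β c) (β d)) r := by
  obtain ⟨α', hα', hαα'⟩ := hα.exists_restrict hc hd hcd
  obtain ⟨β', hβ', hββ'⟩ := hβ.exists_restrict hc hd hcd
  refine ⟨α', β', hα', hβ', fun u hu => ?_⟩
  simp only [subcurveOf, hαα' u hu, hββ' u hu]
  exact hm _ (Icc_subset_Icc hc.1 hd.2 (add_mul_sub_mem_Icc hcd hu))

lemma IsRepar.concat {α₁ α₂ : ℝ → ℝ} (hα₁ : IsRepar α₁) (hα₂ : IsRepar α₂) {a : ℝ}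
    (ha : a ∈ Icc (0:ℝ) 1) : IsRepar (concatRepar a α₁ α₂) := by
  have h₁ : MapsTo (fun v : ℝ => min (2 * v) 1) (Icc 0 1) (Icc 0 1) := fun v hv =>
    ⟨le_min (by linarith [hv.1]) zero_le_one, min_le_right _ _⟩
  have h₂ : MapsTo (fun v : ℝ => max (2 * v - 1) 0) (Icc 0 1) (Icc 0 1) := fun v hv =>
    ⟨le_max_right _ _, max_le (by linarith [hv.2]) zero_le_one⟩
  have hm₁ : MonotoneOn (fun v : ℝ => min (2 * v) 1) (Icc 0 1) := fun x _ y _ hxy =>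
    min_le_min (by linarith) le_rfl
  have hm₂ : MonotoneOn (fun v : ℝ => max (2 * v - 1) 0) (Icc 0 1) := fun x _ y _ hxy =>
    max_le_max (by linarith) le_rfl
  refine isRepar_iff.2 ⟨?_, ?_, ?_, ?_⟩
  · exact ((hα₁.1.comp (by fun_prop) h₁).mul continuousOn_const).add
      ((hα₂.1.comp (by fun_prop) h₂).mul continuousOn_const)
  · intro x hx y hy hxy
    exact add_le_add
      (mul_le_mul_of_nonneg_right (hα₁.2.1 (h₁ hx) (h₁ hy) (hm₁ hx hy hxy)) ha.1)
      (mul_le_mul_of_nonneg_right (hα₂.2.1 (h₂ hx) (h₂ hy) (hm₂ hx hy hxy))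
        (sub_nonneg.2 ha.2))
  · norm_num [concatRepar, hα₁.map_zero, hα₂.map_zero]
  · norm_num [concatRepar, hα₁.map_one, hα₂.map_one]

lemma concatRepar_of_le {α₁ α₂ : ℝ → ℝ} (hα₂ : IsRepar α₂) {a v : ℝ} (hv : v ≤ 1 / 2) :
    concatRepar a α₁ α₂ v = α₁ (2 * v) * a := by
  rw [concatRepar, min_eq_left (by linarith), max_eq_right (by linarith), hα₂.map_zero, zero_mul,
    add_zero]

lemma concatRepar_of_ge {α₁ α₂ : ℝ → ℝ} (hα₁ : IsRepar α₁) {a v : ℝ} (hv : 1 / 2 ≤ v) :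
    concatRepar a α₁ α₂ v = a + α₂ (2 * v - 1) * (1 - a) := by
  rw [concatRepar, min_eq_right (by linarith), max_eq_left (by linarith), hα₁.map_one, one_mul]

lemma matchableWithin_iff_exists_split {a : ℝ} (ha : a ∈ Icc (0:ℝ) 1) :
    MatchableWithin f g r ↔ ∃ b ∈ Icc (0:ℝ) 1,
      MatchableWithin (subcurveOf f 0 a) (subcurveOf g 0 b) r ∧
      MatchableWithin (subcurveOf f a 1) (subcurveOf g b 1) r := by
  have h0 : (0:ℝ) ∈ Icc (0:ℝ) 1 := left_mem_Icc.2 zero_le_one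
  have h1 : (1:ℝ) ∈ Icc (0:ℝ) 1 := right_mem_Icc.2 zero_le_one
  constructor
  · rintro ⟨α, β, hα, hβ, hm⟩
    obtain ⟨c, hc, rfl⟩ : a ∈ α '' Icc 0 1 := hα.2.2.symm ▸ ha
    refine ⟨β c, hβ.mapsTo hc, ?_, ?_⟩
    · simpa only [hα.map_zero, hβ.map_zero] using
        matchableWithin_subcurveOf hα hβ hm h0 hc hc.1
    · simpa only [hα.map_one, hβ.map_one] using
        matchableWithin_subcurveOf hα hβ hm hc h1 hc.2
  · rintro ⟨b, hb, ⟨α₁, β₁, hα₁, hβ₁, hm₁⟩, ⟨α₂, β₂, hα₂, hβ₂, hm₂⟩⟩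
    refine ⟨_, _, hα₁.concat hα₂ ha, hβ₁.concat hβ₂ hb, fun v hv => ?_⟩
    rcases le_total v (1 / 2) with hv' | hv'
    · rw [concatRepar_of_le hα₂ hv', concatRepar_of_le hβ₂ hv']
      simpa [subcurveOf] using hm₁ _ ⟨by linarith [hv.1], by linarith⟩
    · rw [concatRepar_of_ge hα₁ hv', concatRepar_of_ge hβ₁ hv']
      exact hm₂ _ ⟨by linarith, by linarith [hv.2]⟩

end Matching

section FrechetDist

variable {f g g' : ℝ → E2} {ε : ℝ}

lemma frechetDist_le_of_matchableWithin {r : ℝ} (h : MatchableWithin f g r) :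
    frechetDist f g ≤ r :=
  csInf_le (s := {r : ℝ | 0 ≤ r ∧ MatchableWithin f g r}) ⟨0, fun _ hs => hs.1⟩ ⟨h.nonneg, h⟩

lemma frechetDist_le_of_forall_lt (h : ∀ r > ε, MatchableWithin f g r) : frechetDist f g ≤ ε :=
  le_of_forall_gt_imp_ge_of_dense fun r hr => frechetDist_le_of_matchableWithin (h r hr)

lemma MatchableWithin.of_frechetDist_lt (hne : ∃ r, MatchableWithin f g r) {r : ℝ}
    (h : frechetDist f g < r) : MatchableWithin f g r := by
  obtain ⟨r₀, hr₀⟩ := hne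
  let S := {r : ℝ | 0 ≤ r ∧ MatchableWithin f g r}
  obtain ⟨r', ⟨-, α, β, hα, hβ, hm⟩, hr'r⟩ :=
    (csInf_lt_iff (s := S) ⟨0, fun _ hs => hs.1⟩ ⟨r₀, hr₀.nonneg, hr₀⟩).1 h
  exact ⟨α, β, hα, hβ, fun u hu => (hm u hu).trans hr'r.le⟩

lemma frechetDist_le_iff (hf : ContinuousOn f (Icc 0 1)) (hg : ContinuousOn g (Icc 0 1)) :
    frechetDist f g ≤ ε ↔ ∀ r > ε, MatchableWithin f g r :=
  ⟨fun h _ hr => .of_frechetDist_lt (matchableWithin_of_continuousOn hf hg) (h.trans_lt hr),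
    frechetDist_le_of_forall_lt⟩

lemma frechetDist_congr (hg : EqOn g g' (Icc 0 1)) : frechetDist f g = frechetDist f g' := by
  unfold frechetDist
  congr! 4 with r
  exact matchableWithin_congr (eqOn_refl f _) hg

lemma frechetDist_le_frechetDist_add (hne : ∃ r, MatchableWithin f g r) {η : ℝ}
    (hη : ∀ u ∈ Icc (0:ℝ) 1, ‖g u - g' u‖ ≤ η) : frechetDist f g' ≤ frechetDist f g + η :=
  frechetDist_le_of_forall_lt fun r hr =>
    sub_add_cancel r η ▸ (MatchableWithin.of_frechetDist_lt hne (by linarith)).of_dist_le hη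

/-- The Fréchet distance is `1`-Lipschitz for the uniform distance of curves. -/
lemma continuous_frechetDist {X : Type*} [TopologicalSpace X] (hf : ContinuousOn f (Icc 0 1))
    {G : X → ℝ → E2} (hG : Continuous (Function.uncurry G)) :
    Continuous fun x => frechetDist f (G x) := by
  let I := Icc (0:ℝ) 1
  let ext : C(I, E2) → ℝ → E2 := fun φ u => φ (projIcc 0 1 zero_le_one u)
  have hext : ∀ φ, ContinuousOn (ext φ) I := fun φ =>
    (φ.continuous.comp continuous_projIcc).continuousOn
  have hLip : LipschitzWith 1 fun φ => frechetDist f (ext φ) :=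
    LipschitzWith.of_le_add fun φ ψ => frechetDist_le_frechetDist_add
      (matchableWithin_of_continuousOn hf (hext ψ)) fun u _ => by
        rw [← dist_eq_norm, dist_comm]; exact ContinuousMap.dist_apply_le_dist _
  let Φ : X → C(I, E2) := fun x => ⟨fun u => G x u, by fun_prop⟩
  have hΦ : Continuous Φ := ContinuousMap.continuous_of_continuous_uncurry _ <|
    hG.comp (continuous_fst.prodMk (continuous_subtype_val.comp continuous_snd))
  convert hLip.continuous.comp hΦ using 1
  funext x
  exact frechetDist_congr fun u hu => by simp [ext, Φ, projIcc_of_mem _ hu]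

end FrechetDist

section Polyline

variable (q : ℕ → E2)

lemma polyParam_of_mem_Icc (n : ℕ) {x : ℝ} (hx : x ∈ Icc (n:ℝ) (n + 1)) :
    polyParam q x = q n + (x - n) • (q (n + 1) - q n) := by
  rcases hx.2.eq_or_lt with rfl | hlt
  · have : ⌊(n:ℝ) + 1⌋₊ = n + 1 := by exact_mod_cast Nat.floor_natCast (R := ℝ) (n + 1)
    simp only [polyParam, this]
    push_cast
    simp
  · rw [polyParam, Nat.floor_eq_on_Ico n x ⟨hx.1, hlt⟩]

lemma polyParam_of_nonpos {x : ℝ} (hx : x ≤ 0) :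
    polyParam q x = q 0 + x • (q 1 - q 0) := by
  simp [polyParam, Nat.floor_of_nonpos hx]

lemma continuous_polyParam : Continuous (polyParam q) := by
  have hIic : ∀ n : ℕ, ContinuousOn (polyParam q) (Iic (n:ℝ)) := by
    intro n
    induction n with
    | zero =>
      have : Continuous fun x : ℝ => q 0 + x • (q 1 - q 0) := by fun_prop
      exact this.continuousOn.congr fun x hx => polyParam_of_nonpos q (by simpa using hx)
    | succ n ih =>
      have : Continuous fun x : ℝ => q n + (x - n) • (q (n + 1) - q n) := by fun_prop
      have hpiece : ContinuousOn (polyParam q) (Icc (n:ℝ) (n + 1)) :=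
        this.continuousOn.congr fun x hx => polyParam_of_mem_Icc q n hx
      have := ih.union_of_isClosed hpiece isClosed_Iic isClosed_Icc
      rwa [Iic_union_Icc_eq_Iic (by linarith), ← Nat.cast_succ] at this
  refine continuous_iff_continuousAt.2 fun x =>
    (hIic (⌈x⌉₊ + 1)).continuousAt (Iic_mem_nhds ?_)
  push_cast
  linarith [Nat.le_ceil x]

lemma polyParam_congr {q' : ℕ → E2} {M : ℕ} (h : ∀ m ≤ M, q m = q' m) {x : ℝ}
    (hx : x ∈ Icc 0 (M:ℝ)) : polyParam q x = polyParam q' x := by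
  rcases hx.2.eq_or_lt with rfl | hlt
  · simp [polyParam, h M le_rfl]
  · have : ⌊x⌋₊ < M := (Nat.floor_lt hx.1).2 hlt
    simp only [polyParam, h _ this.le, h _ this]

variable (p : ℕ → E2) (j : ℕ → ℕ) (k : ℕ)

lemma continuous_simplCurve : Continuous (simplCurve p j k) :=
  (continuous_polyParam _).comp (by fun_prop)

lemma subcurveOf_simplCurve_succ_left :
    EqOn (subcurveOf (simplCurve p j (k + 1)) 0 (k / (k + 1))) (simplCurve p j k)
      (Icc 0 1) := by
  intro u hu
  have hk : ((k:ℝ) + 1) ≠ 0 := by positivity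
  have harg : (0 + u * ((k:ℝ) / (k + 1) - 0)) * ((k + 1 : ℕ) : ℝ) = u * k := by
    push_cast; field_simp; ring
  simp only [subcurveOf, simplCurve, harg]
  refine (polyParam_congr _ (M := k) (fun m hm => ?_)
    ⟨mul_nonneg hu.1 k.cast_nonneg, ?_⟩).symm
  · rw [min_eq_left hm, min_eq_left (hm.trans k.le_succ)]
  · nlinarith [hu.2, (Nat.cast_nonneg k : (0:ℝ) ≤ k)]

lemma subcurveOf_simplCurve_succ_right :
    EqOn (subcurveOf (simplCurve p j (k + 1)) (k / (k + 1)) 1)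
      (segCurve (p (j k)) (p (j (k + 1)))) (Icc 0 1) := by
  intro u hu
  have hk : ((k:ℝ) + 1) ≠ 0 := by positivity
  have harg : ((k:ℝ) / (k + 1) + u * (1 - k / (k + 1))) * ((k + 1 : ℕ) : ℝ) = k + u := by
    push_cast; field_simp; ring
  simp only [subcurveOf, simplCurve, harg]
  rw [polyParam_of_mem_Icc _ k ⟨by linarith [hu.1], by linarith [hu.2]⟩]
  simp [segCurve]

lemma subcurveOf_subcurve_left (t b : ℝ) :
    subcurveOf (subcurve p 0 t) 0 b = subcurve p 0 (b * t) := by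
  funext u
  simp only [subcurveOf, subcurve]
  ring_nf

lemma subcurveOf_subcurve_right (t b : ℝ) :
    subcurveOf (subcurve p 0 t) b 1 = subcurve p (b * t) t := by
  funext u
  simp only [subcurveOf, subcurve]
  ring_nf

end Polyline

lemma IsCompact.exists_le_of_forall_lt {X : Type*} [TopologicalSpace X] {K : Set X}
    (hK : IsCompact K) {F : X → ℝ} (hF : ContinuousOn F K) {ε : ℝ}
    (h : ∀ r > ε, ∃ x ∈ K, F x ≤ r) : ∃ x ∈ K, F x ≤ ε := by
  obtain ⟨x₁, hx₁, -⟩ := h (ε + 1) (by linarith)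
  obtain ⟨x₀, hx₀, hmin⟩ := hK.exists_isMinOn ⟨x₁, hx₁⟩ hF
  refine ⟨x₀, hx₀, le_of_forall_gt_imp_ge_of_dense fun r hr => ?_⟩
  obtain ⟨x, hx, hxr⟩ := h r hr
  exact (hmin hx).trans hxr

section Simplification

variable {p : ℕ → E2} {j : ℕ → ℕ} {k : ℕ} {t : ℝ}

lemma matchableWithin_simplCurve_succ_iff (ht : 0 ≤ t) {r : ℝ} :
    MatchableWithin (simplCurve p j (k + 1)) (subcurve p 0 t) r ↔ ∃ s ∈ Icc 0 t,
      MatchableWithin (simplCurve p j k) (subcurve p 0 s) r ∧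
      MatchableWithin (segCurve (p (j k)) (p (j (k + 1)))) (subcurve p s t) r := by
  have ha : (k:ℝ) / (k + 1) ∈ Icc (0:ℝ) 1 :=
    ⟨by positivity, div_le_one_of_le₀ (by linarith) (by positivity)⟩
  rw [matchableWithin_iff_exists_split ha]
  simp only [subcurveOf_subcurve_left, subcurveOf_subcurve_right]
  simp only [matchableWithin_congr (subcurveOf_simplCurve_succ_left p j k) (eqOn_refl _ _)]
  simp only [matchableWithin_congr (subcurveOf_simplCurve_succ_right p j k) (eqOn_refl _ _)]
  constructor
  · rintro ⟨b, hb, h⟩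
    exact ⟨b * t, ⟨mul_nonneg hb.1 ht, mul_le_of_le_one_left ht hb.2⟩, h⟩
  · rintro ⟨s, hs, h⟩
    have hst : s / t * t = s := by
      rcases ht.eq_or_lt with rfl | htpos
      · simp [le_antisymm hs.2 hs.1]
      · exact div_mul_cancel₀ s htpos.ne'
    exact ⟨s / t, ⟨div_nonneg hs.1 ht, div_le_one_of_le₀ hs.2 ht⟩, hst.symm ▸ h⟩

lemma frechetDist_simplCurve_succ_le_iff (ht : 0 ≤ t) {ε : ℝ} :
    frechetDist (simplCurve p j (k + 1)) (subcurve p 0 t) ≤ ε ↔ ∃ s ∈ Icc 0 t,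
      frechetDist (simplCurve p j k) (subcurve p 0 s) ≤ ε ∧
      frechetDist (segCurve (p (j k)) (p (j (k + 1)))) (subcurve p s t) ≤ ε := by
  have hpoly := continuous_polyParam p
  have hsimpl : ∀ k, ContinuousOn (simplCurve p j k) (Icc 0 1) := fun k =>
    (continuous_simplCurve p j k).continuousOn
  have hseg : ContinuousOn (segCurve (p (j k)) (p (j (k + 1)))) (Icc 0 1) := by
    unfold segCurve; fun_prop
  have hsub : ∀ s t, ContinuousOn (subcurve p s t) (Icc 0 1) := fun s t => by
    unfold subcurve; fun_prop
  rw [frechetDist_le_iff (hsimpl _) (hsub _ _)]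
  constructor
  · intro h
    have hF : Continuous fun s => max (frechetDist (simplCurve p j k) (subcurve p 0 s))
        (frechetDist (segCurve (p (j k)) (p (j (k + 1)))) (subcurve p s t)) :=
      (continuous_frechetDist (hsimpl k) (by unfold subcurve; fun_prop)).max
        (continuous_frechetDist hseg (by unfold subcurve; fun_prop))
    obtain ⟨s, hs, hsε⟩ := isCompact_Icc.exists_le_of_forall_lt hF.continuousOn fun r hr => by
      obtain ⟨s, hs, h₁, h₂⟩ := (matchableWithin_simplCurve_succ_iff ht).1 (h r hr)
      exact ⟨s, hs, max_le (frechetDist_le_of_matchableWithin h₁)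
        (frechetDist_le_of_matchableWithin h₂)⟩
    exact ⟨s, hs, max_le_iff.1 hsε⟩
  · rintro ⟨s, hs, h₁, h₂⟩ r hr
    rw [frechetDist_le_iff (hsimpl _) (hsub _ _)] at h₁
    rw [frechetDist_le_iff hseg (hsub _ _)] at h₂
    exact (matchableWithin_simplCurve_succ_iff ht).2 ⟨s, hs, h₁ r hr, h₂ r hr⟩

end Simplification

lemma StrictMonoOn.update_succ {j : ℕ → ℕ} {k i : ℕ} (hj : StrictMonoOn j (Iic k))
    (hi : j k < i) : StrictMonoOn (Function.update j (k + 1) i) (Iic (k + 1)) := by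
  intro a _ b hb hab
  have hak : a ≤ k := Nat.le_of_lt_succ (hab.trans_le hb)
  rw [Function.update_of_ne (Nat.lt_succ_of_le hak).ne]
  rcases (mem_Iic.1 hb).lt_or_eq with hbk | rfl
  · rw [Function.update_of_ne hbk.ne]
    exact hj hak (Nat.le_of_lt_succ hbk) hab
  · rw [Function.update_self]
    exact (hj.monotoneOn hak (mem_Iic.2 le_rfl) hak).trans_lt hi

lemma simplCurve_update_succ (p : ℕ → E2) (j : ℕ → ℕ) (k i : ℕ) :
    simplCurve p (Function.update j (k + 1) i) k = simplCurve p j k := by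
  funext u
  simp only [simplCurve]
  congr 1
  funext m
  rw [Function.update_of_ne ((min_le_right m k).trans_lt k.lt_succ_self).ne]

theorem stmt_9_general (ε : ℝ) (p : ℕ → E2) (k i : ℕ) (t : ℝ)
    (ht : 0 ≤ t) :
    rho ε p (k + 1) i t ↔
      ∃ h < i, ∃ s, 0 ≤ s ∧ s ≤ t ∧ rho ε p k h s ∧
        frechetDist (segCurve (p h) (p i)) (subcurve p s t) ≤ ε := by
  constructor
  · rintro ⟨j, hj, hj0, rfl, hd⟩
    obtain ⟨s, hs, hd₁, hd₂⟩ := (frechetDist_simplCurve_succ_le_iff ht).1 hd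
    exact ⟨j k, hj (mem_Iic.2 k.le_succ) (mem_Iic.2 le_rfl) k.lt_succ_self, s, hs.1, hs.2,
      ⟨j, hj.mono (Iic_subset_Iic.2 k.le_succ), hj0, rfl, hd₁⟩, hd₂⟩
  · rintro ⟨h, hhi, s, hs₀, hst, ⟨j, hj, hj0, rfl, hd₁⟩, hd₂⟩
    refine ⟨Function.update j (k + 1) i, hj.update_succ hhi, ?_, Function.update_self .., ?_⟩
    · rw [Function.update_of_ne (Nat.succ_ne_zero k).symm, hj0]
    · refine (frechetDist_simplCurve_succ_le_iff ht).2 ⟨s, ⟨hs₀, hst⟩, ?_, ?_⟩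
      · rwa [simplCurve_update_succ]
      · rwa [Function.update_self, Function.update_of_ne k.succ_ne_self.symm]

/-- Observation: a point is reachable by a `(k+1, i)`-simplification iff some
point `s ≤ t` is reachable by a `(k, h)`-simplification for a vertex `h` before
`i`, and the link from `p h` to `p i` has Fréchet distance at most `ε` to the
subcurve `P[s,t]`. -/
theorem stmt_9 (ε : ℝ) (hε : 0 ≤ ε) (p : ℕ → E2) (k i : ℕ) (t : ℝ)
    (ht : 0 ≤ t) :
    rho ε p (k + 1) i t ↔
      ∃ h < i, ∃ s, 0 ≤ s ∧ s ≤ t ∧ rho ε p k h s ∧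
        frechetDist (segCurve (p h) (p i)) (subcurve p s t) ≤ ε :=
  stmt_9_general ε p k i t ht
end

section
/- Farthest-point sufficiency lemma: fix ε ≥ 0, a polyline P with parametrization π, indices h < i, and parameters s ≤ ŝ ≤ t ≤ t̂ such that: (a) the subcurve P[s, ŝ] is a line segment lying entirely within distance ε of p_h; (b) the subcurve P[t, t̂] is a line segment lying entirely within distance ε of p_i; and (c) the segment from p_h to p_i has Fréchet distance at most ε to P[s, t]. Then the segment from p_h to p_i has Fréchet distance at most ε to P[ŝ, t̂]. -/
/-!
Take a matching of the link `p h p i` with `P[s,t]` of width `ε + δ`, and clamp its `P`-parameter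
from below at `sHat`. While the original parameter is still below `sHat`, the link point moves
from `p h` towards a point matched to `P(sHat)`; since the distance to a fixed point is convex
along a segment, it stays within `ε + δ` of `P(sHat)`. Parking the link at `p i` while `P[t,tHat]`
is traversed then completes a matching with `P[sHat,tHat]`, and `δ → 0` gives the claim.
-/

open Set

def IsReparOnto (γ : ℝ → ℝ) (a b : ℝ) : Prop :=
  ContinuousOn γ (Icc 0 1) ∧ MonotoneOn γ (Icc 0 1) ∧ γ 0 = a ∧ γ 1 = b

namespace IsReparOnto

variable {γ W : ℝ → ℝ} {a b : ℝ}

lemma mem_Icc (hγ : IsReparOnto γ a b) {u : ℝ} (hu : u ∈ Icc (0 : ℝ) 1) : γ u ∈ Icc a b := by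
  obtain ⟨-, hmono, h0, h1⟩ := hγ
  exact ⟨h0 ▸ hmono (left_mem_Icc.2 zero_le_one) hu hu.1,
    h1 ▸ hmono hu (right_mem_Icc.2 zero_le_one) hu.2⟩

lemma comp (hγ : IsReparOnto γ a b) (hW : IsReparOnto W 0 1) : IsReparOnto (γ ∘ W) a b :=
  ⟨hγ.1.comp hW.1 fun _ hu => hW.mem_Icc hu,
    fun _ hx _ hy hxy => hγ.2.1 (hW.mem_Icc hx) (hW.mem_Icc hy) (hW.2.1 hx hy hxy),
    by simp only [Function.comp_apply, hW.2.2.1, hγ.2.2.1],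
    by simp only [Function.comp_apply, hW.2.2.2, hγ.2.2.2]⟩

lemma isRepar (hγ : IsReparOnto γ 0 1) : IsRepar γ := by
  refine ⟨hγ.1, hγ.2.1, (image_subset_iff.2 fun _ => hγ.mem_Icc).antisymm ?_⟩
  simpa only [hγ.2.2.1, hγ.2.2.2] using intermediate_value_Icc zero_le_one hγ.1

end IsReparOnto

lemma IsRepar.isReparOnto {α : ℝ → ℝ} (hα : IsRepar α) : IsReparOnto α 0 1 := by
  obtain ⟨hcont, hmono, himage⟩ := hα
  have hmem : ∀ u ∈ Icc (0 : ℝ) 1, α u ∈ Icc (0 : ℝ) 1 := fun u hu =>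
    himage ▸ mem_image_of_mem α hu
  obtain ⟨u₀, hu₀, hαu₀⟩ := himage.symm ▸ left_mem_Icc.2 zero_le_one
  obtain ⟨u₁, hu₁, hαu₁⟩ := himage.symm ▸ right_mem_Icc.2 zero_le_one
  refine ⟨hcont, hmono, ?_, ?_⟩
  · exact le_antisymm ((hmono (left_mem_Icc.2 zero_le_one) hu₀ hu₀.1).trans_eq hαu₀)
      (hmem 0 (left_mem_Icc.2 zero_le_one)).1
  · exact le_antisymm (hmem 1 (right_mem_Icc.2 zero_le_one)).2
      (hαu₁.symm.trans_le (hmono hu₁ (right_mem_Icc.2 zero_le_one) hu₁.2))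

lemma frechetDist_le_of_forall_le {f g : ℝ → E2} {r : ℝ} (hr : 0 ≤ r) {α β : ℝ → ℝ}
    (hα : IsRepar α) (hβ : IsRepar β) (h : ∀ u ∈ Icc (0 : ℝ) 1, ‖f (α u) - g (β u)‖ ≤ r) :
    frechetDist f g ≤ r :=
  csInf_le ⟨0, fun _ hr => hr.1⟩ ⟨hr, α, β, hα, hβ, h⟩

lemma exists_repar_of_frechetDist_lt {f g : ℝ → E2} {r : ℝ}
    (hf : Bornology.IsBounded (f '' Icc 0 1)) (hg : Bornology.IsBounded (g '' Icc 0 1))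
    (h : frechetDist f g < r) :
    ∃ α β, IsRepar α ∧ IsRepar β ∧ ∀ u ∈ Icc (0 : ℝ) 1, ‖f (α u) - g (β u)‖ < r := by
  obtain ⟨C, hC⟩ := (hf.sub hg).exists_norm_le
  have hne : {r : ℝ | 0 ≤ r ∧ ∃ α β : ℝ → ℝ, IsRepar α ∧ IsRepar β ∧
      ∀ u ∈ Icc (0 : ℝ) 1, ‖f (α u) - g (β u)‖ ≤ r}.Nonempty := by
    have hid : IsRepar id := ⟨continuousOn_id, monotoneOn_id, image_id _⟩
    refine ⟨max C 0, le_max_right _ _, id, id, hid, hid, fun u hu => ?_⟩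
    exact (hC _ (sub_mem_sub (mem_image_of_mem f hu) (mem_image_of_mem g hu))).trans
      (le_max_left _ _)
  obtain ⟨r', ⟨-, α, β, hα, hβ, hr'⟩, hr'r⟩ := (csInf_lt_iff ⟨0, fun _ hr => hr.1⟩ hne).1 h
  exact ⟨α, β, hα, hβ, fun u hu => (hr' u hu).trans_lt hr'r⟩

lemma isBounded_image_segCurve (a b : E2) : Bornology.IsBounded (segCurve a b '' Icc 0 1) :=
  (isCompact_Icc.image (by unfold segCurve; fun_prop)).isBounded

lemma isBounded_image_polyParam (p : ℕ → E2) (s t : ℝ) :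
    Bornology.IsBounded (polyParam p '' Icc s t) := by
  -- on `[s,t]` the vertex index is at most `⌊t⌋₊` and the offset from it lies in `[min s 0, 1]`
  -- (negative parameters have vertex index `0`)
  refine (Bornology.isBounded_biUnion_finset (Finset.range (⌊t⌋₊ + 1))
    (f := fun n => (fun τ : ℝ => p n + τ • (p (n + 1) - p n)) '' Icc (min s 0) 1)).2
    (fun n _ => (isCompact_Icc.image (by fun_prop)).isBounded) |>.subset ?_
  rintro _ ⟨x, hx, rfl⟩
  refine mem_iUnion₂.2 ⟨⌊x⌋₊, Finset.mem_range.2 (Nat.lt_succ_of_le (Nat.floor_le_floor hx.2)),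
    x - ⌊x⌋₊, ⟨?_, ?_⟩, rfl⟩
  · rcases le_or_gt 0 x with hx0 | hx0
    · exact (min_le_right _ _).trans (sub_nonneg.2 (Nat.floor_le hx0))
    · rw [Nat.floor_of_nonpos hx0.le, Nat.cast_zero, sub_zero]
      exact (min_le_left _ _).trans hx.1
  · linarith [Nat.lt_floor_add_one x]

lemma isBounded_image_subcurve (p : ℕ → E2) {s t : ℝ} (hst : s ≤ t) :
    Bornology.IsBounded (subcurve p s t '' Icc 0 1) := by
  refine (isBounded_image_polyParam p s t).subset ?_
  rintro _ ⟨u, hu, rfl⟩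
  exact ⟨s + u * (t - s), ⟨by nlinarith [hu.1], by nlinarith [hu.2]⟩, rfl⟩

lemma exists_reparOnto_of_frechetDist_subcurve_lt {f : ℝ → E2} {p : ℕ → E2} {s t r : ℝ}
    (hf : Bornology.IsBounded (f '' Icc 0 1)) (hst : s ≤ t)
    (h : frechetDist f (subcurve p s t) < r) :
    ∃ α γ, IsReparOnto α 0 1 ∧ IsReparOnto γ s t ∧
      ∀ u ∈ Icc (0 : ℝ) 1, ‖f (α u) - polyParam p (γ u)‖ < r := by
  obtain ⟨α, β, hα, hβ, hlt⟩ :=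
    exists_repar_of_frechetDist_lt hf (isBounded_image_subcurve p hst) h
  obtain ⟨hβc, hβm, hβ0, hβ1⟩ := hβ.isReparOnto
  refine ⟨α, fun u => s + β u * (t - s), hα.isReparOnto,
    ⟨by fun_prop, fun x hx y hy hxy => ?_, by simp [hβ0], by simp [hβ1]⟩, hlt⟩
  exact add_le_add_right (mul_le_mul_of_nonneg_right (hβm hx hy hxy) (sub_nonneg.2 hst)) s

lemma frechetDist_subcurve_le_of_reparOnto {f : ℝ → E2} {p : ℕ → E2} {s t r : ℝ}
    (hr : 0 ≤ r) {α γ : ℝ → ℝ} (hα : IsReparOnto α 0 1) (hγ : IsReparOnto γ s t)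
    (h : ∀ u ∈ Icc (0 : ℝ) 1, ‖f (α u) - polyParam p (γ u)‖ ≤ r) :
    frechetDist f (subcurve p s t) ≤ r := by
  have hst : s ≤ t := (hγ.mem_Icc (left_mem_Icc.2 zero_le_one)).2.trans' hγ.2.2.1.symm.le
  rcases hst.eq_or_lt with rfl | hst
  · refine frechetDist_le_of_forall_le hr hα.isRepar (β := id)
      ⟨continuousOn_id, monotoneOn_id, image_id _⟩ fun u hu => ?_
    have hγu : γ u = s := le_antisymm (hγ.mem_Icc hu).2 (hγ.mem_Icc hu).1
    simpa [subcurve, hγu] using h u hu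
  · have hts : t - s ≠ 0 := (sub_pos.2 hst).ne'
    have hβ : IsReparOnto (fun u => (γ u - s) / (t - s)) 0 1 :=
      ⟨(hγ.1.sub continuousOn_const).div_const _,
        fun x hx y hy hxy => div_le_div_of_nonneg_right (sub_le_sub_right (hγ.2.1 hx hy hxy) _)
          (sub_pos.2 hst).le,
        by simp [hγ.2.2.1], by simp [hγ.2.2.2, hts]⟩
    refine frechetDist_le_of_forall_le hr hα.isRepar hβ.isRepar fun u hu => ?_
    simpa [subcurve, div_mul_cancel₀ _ hts] using h u hu

lemma norm_segCurve_sub_le_max (a b c : E2) {v v₀ v₁ : ℝ} (hv : v ∈ Icc v₀ v₁) :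
    ‖segCurve a b v - c‖ ≤ max ‖segCurve a b v₀ - c‖ ‖segCurve a b v₁ - c‖ := by
  have hseg : (fun v => ‖segCurve a b v - c‖) = (fun z => dist z c) ∘ AffineMap.lineMap a b := by
    ext v
    simp [segCurve, dist_eq_norm, AffineMap.lineMap_apply_module', add_comm]
  have hconv : ConvexOn ℝ univ fun v => ‖segCurve a b v - c‖ := by
    simpa only [hseg, preimage_univ] using (convexOn_univ_dist c).comp_affineMap _
  exact hconv.le_max_of_mem_Icc (mem_univ _) (mem_univ _) hv

section Matching

variable {a b : E2} {p : ℕ → E2} {s sHat t r : ℝ} {α γ : ℝ → ℝ}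

lemma norm_segCurve_sub_polyParam_le_of_lt (hsHat : sHat ∈ Icc s t) (hα : IsReparOnto α 0 1)
    (hγ : IsReparOnto γ s t)
    (hmatch : ∀ u ∈ Icc (0 : ℝ) 1, ‖segCurve a b (α u) - polyParam p (γ u)‖ ≤ r)
    (hstart : ‖a - polyParam p sHat‖ ≤ r) {x : ℝ} (hx : x ∈ Icc (0 : ℝ) 1) (hlt : γ x < sHat) :
    ‖segCurve a b (α x) - polyParam p sHat‖ ≤ r := by
  -- before `γ` reaches `sHat` the matched link points lie between `a` and a point matched to `sHat`
  obtain ⟨u₀, hu₀, hγu₀⟩ : sHat ∈ γ '' Icc 0 1 := by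
    have hivt := intermediate_value_Icc zero_le_one hγ.1
    rw [hγ.2.2.1, hγ.2.2.2] at hivt
    exact hivt hsHat
  have hxu₀ : x ≤ u₀ := (hγ.2.1.reflect_lt hx hu₀ (hγu₀ ▸ hlt)).le
  have hαx : α x ∈ Icc 0 (α u₀) := ⟨(hα.mem_Icc hx).1, hα.2.1 hx hu₀ hxu₀⟩
  calc ‖segCurve a b (α x) - polyParam p sHat‖
      ≤ max ‖segCurve a b 0 - polyParam p sHat‖ ‖segCurve a b (α u₀) - polyParam p sHat‖ :=
        norm_segCurve_sub_le_max _ _ _ hαx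
    _ ≤ r := max_le (by simpa [segCurve] using hstart) (by simpa [hγu₀] using hmatch u₀ hu₀)

lemma frechetDist_segCurve_subcurve_le_of_reparOnto {tHat : ℝ} (hsHat : sHat ∈ Icc s t)
    (htHat : t ≤ tHat) (hα : IsReparOnto α 0 1) (hγ : IsReparOnto γ s t)
    (hmatch : ∀ u ∈ Icc (0 : ℝ) 1, ‖segCurve a b (α u) - polyParam p (γ u)‖ ≤ r)
    (hstart : ‖a - polyParam p sHat‖ ≤ r) (hend : ∀ u ∈ Icc t tHat, ‖b - polyParam p u‖ ≤ r) :
    frechetDist (segCurve a b) (subcurve p sHat tHat) ≤ r := by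
  -- run the given matching at double speed with the parameter clamped below at `sHat`,
  -- then traverse `P[t, tHat]` while the link stays at `b`
  set W : ℝ → ℝ := fun u => min (2 * u) 1
  have hW : IsReparOnto W 0 1 :=
    ⟨by fun_prop, fun x _ y _ hxy => by simp only [W]; gcongr, by norm_num [W], by norm_num [W]⟩
  have hγW := hγ.comp hW
  refine frechetDist_subcurve_le_of_reparOnto (hstart.trans' (norm_nonneg _)) (hα.comp hW)
    (γ := fun u => max sHat (γ (W u)) + max 0 (2 * u - 1) * (tHat - t))
    ⟨?_, fun x _ y _ hxy => ?_, ?_, ?_⟩ fun u hu => ?_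
  · exact (continuousOn_const.sup hγW.1).add
      ((continuous_const.max (by fun_prop)).continuousOn.mul continuousOn_const)
  · exact add_le_add (max_le_max le_rfl (hγW.2.1 ‹_› ‹_› hxy))
      (mul_le_mul_of_nonneg_right (max_le_max le_rfl (by linarith)) (sub_nonneg.2 htHat))
  · simp [W, hγ.2.2.1, hsHat.1]
  · norm_num [W, hγ.2.2.2, hsHat.2]
  rcases le_or_gt (2 * u) 1 with hu2 | hu2
  · rw [max_eq_left (by linarith : 2 * u - 1 ≤ 0), zero_mul, add_zero]
    rcases le_or_gt sHat (γ (W u)) with hle | hlt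
    · rw [max_eq_right hle]
      exact hmatch (W u) (hW.mem_Icc hu)
    · rw [max_eq_left hlt.le]
      exact norm_segCurve_sub_polyParam_le_of_lt hsHat hα hγ hmatch hstart (hW.mem_Icc hu) hlt
  · have hWu : W u = 1 := min_eq_right hu2.le
    simp only [Function.comp_apply, hWu, hα.2.2.2, hγ.2.2.2, max_eq_right hsHat.2,
      max_eq_right (by linarith : 0 ≤ 2 * u - 1)]
    simpa [segCurve] using hend _ ⟨by nlinarith, by nlinarith [hu.2]⟩

end Matching

theorem stmt_10_general (p : ℕ → E2) (ε : ℝ) (h i : ℕ)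
    (s sHat t tHat : ℝ) (h1 : s ≤ sHat) (h2 : sHat ≤ t) (h3 : t ≤ tHat)
    (ha1 : ∀ u ∈ Icc s sHat, ‖polyParam p u - p h‖ ≤ ε)
    (hb1 : ∀ u ∈ Icc t tHat, ‖polyParam p u - p i‖ ≤ ε)
    (hc : frechetDist (segCurve (p h) (p i)) (subcurve p s t) ≤ ε) :
    frechetDist (segCurve (p h) (p i)) (subcurve p sHat tHat) ≤ ε := by
  refine le_of_forall_pos_le_add fun δ hδ => ?_
  obtain ⟨α, γ, hα, hγ, hmatch⟩ := exists_reparOnto_of_frechetDist_subcurve_lt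
    (isBounded_image_segCurve _ _) (h1.trans h2) (hc.trans_lt (lt_add_of_pos_right ε hδ))
  refine frechetDist_segCurve_subcurve_le_of_reparOnto ⟨h1, h2⟩ h3 hα hγ
    (fun u hu => (hmatch u hu).le) ?_ fun u hu => ?_
  · rw [norm_sub_rev]
    linarith [ha1 sHat ⟨h1, le_rfl⟩]
  · rw [norm_sub_rev]
    linarith [hb1 u hu]

/-- Farthest-point sufficiency: if the subcurves `P[s,sHat]` and `P[t,tHat]` are line
segments lying within distance `ε` of `p h` and `p i` respectively, and the
link from `p h` to `p i` is within Fréchet distance `ε` of `P[s,t]`, then it is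
also within Fréchet distance `ε` of `P[sHat,tHat]`. -/
theorem stmt_10 (p : ℕ → E2) (ε : ℝ) (hε : 0 ≤ ε) (h i : ℕ) (hhi : h < i)
    (s sHat t tHat : ℝ) (h1 : s ≤ sHat) (h2 : sHat ≤ t) (h3 : t ≤ tHat)
    (ha1 : ∀ u ∈ Icc s sHat, ‖polyParam p u - p h‖ ≤ ε)
    (ha2 : ∃ d : E2, ∀ u ∈ Icc s sHat, polyParam p u = polyParam p s + (u - s) • d)
    (hb1 : ∀ u ∈ Icc t tHat, ‖polyParam p u - p i‖ ≤ ε)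
    (hb2 : ∃ d : E2, ∀ u ∈ Icc t tHat, polyParam p u = polyParam p t + (u - t) • d)
    (hc : frechetDist (segCurve (p h) (p i)) (subcurve p s t) ≤ ε) :
    frechetDist (segCurve (p h) (p i)) (subcurve p sHat tHat) ≤ ε :=
  stmt_10_general p ε h i s sHat t tHat h1 h2 h3 ha1 hb1 hc
end

section
/- Douglas–Peucker correctness (Hausdorff): define the Douglas–Peucker simplification of a finite point sequence p₁,…,p_n with threshold ε recursively: if every p_i is within distance ε of the segment p₁p_n, output ⟨p₁, p_n⟩; otherwise pick an index f maximizing the distance from p_f to segment p₁p_n, recurse on ⟨p₁,…,p_f⟩ and ⟨p_f,…,p_n⟩, and concatenate. Then every vertex of the input polyline lies within distance ε of the union of the segments of the output polyline (i.e., the directed Hausdorff distance from the input vertex set to the output polyline is at most ε). -/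
open Set

/-- The Douglas–Peucker recursion on vertex indices, with a fuel parameter
(taking fuel `j - i` suffices). If every vertex `p m` with `i ≤ m ≤ j` is
within distance `ε` of the segment `p i p j` (or there is no intermediate
vertex), output `{i, j}`; otherwise split at an intermediate vertex farthest
from that segment and recurse on the two halves. -/
noncomputable def dp (p : ℕ → E2) (ε : ℝ) : ℕ → ℕ → ℕ → Finset ℕ
  | 0, i, j => {i, j}
  | fuel + 1, i, j =>
    if h : (∀ m ∈ Finset.Icc i j,
          Metric.infDist (p m) (segment ℝ (p i) (p j)) ≤ ε) ∨
        ¬(Finset.Ioo i j).Nonempty then {i, j}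
    else
      let f := Classical.choose (Finset.exists_max_image (Finset.Ioo i j)
        (fun m => Metric.infDist (p m) (segment ℝ (p i) (p j)))
        (not_not.mp (not_or.mp h).2))
      dp p ε fuel i f ∪ dp p ε fuel f j

/-- The output polyline: the union of the segments joining consecutive
(in index order) selected vertices. -/
def outSet (p : ℕ → E2) (Q : Finset ℕ) : Set E2 :=
  ⋃ i ∈ Q, ⋃ j ∈ Q,
    {x | i < j ∧ (∀ l ∈ Q, l ≤ i ∨ j ≤ l) ∧ x ∈ segment ℝ (p i) (p j)}

/-- The input polyline on vertices `p 0, …, p n`. -/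
def inSet (p : ℕ → E2) (n : ℕ) : Set E2 :=
  ⋃ i ∈ Finset.range n, segment ℝ (p i) (p (i + 1))

lemma dp_struct (p : ℕ → E2) (ε : ℝ) :
    ∀ fuel i j, i ≤ j →
      i ∈ dp p ε fuel i j ∧ j ∈ dp p ε fuel i j ∧
        ∀ l ∈ dp p ε fuel i j, l ∈ Finset.Icc i j := by
  intro fuel
  induction fuel with
  | zero =>
    intro i j hij
    simp [dp, Finset.mem_Icc, hij]
  | succ fuel ih =>
    intro i j hij
    rw [dp]
    split_ifs with h
    · simp [Finset.mem_Icc, hij]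
    · set f := Classical.choose (Finset.exists_max_image (Finset.Ioo i j)
        (fun m => Metric.infDist (p m) (segment ℝ (p i) (p j)))
        (not_not.mp (not_or.mp h).2)) with hf
      have hspec := Classical.choose_spec (Finset.exists_max_image (Finset.Ioo i j)
        (fun m => Metric.infDist (p m) (segment ℝ (p i) (p j)))
        (not_not.mp (not_or.mp h).2))
      rw [← hf] at hspec
      have hfm : f ∈ Finset.Ioo i j := hspec.1
      rw [Finset.mem_Ioo] at hfm
      obtain ⟨hL1, hL2, hL3⟩ := ih i f (le_of_lt hfm.1)
      obtain ⟨hR1, hR2, hR3⟩ := ih f j (le_of_lt hfm.2)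
      refine ⟨Finset.mem_union_left _ hL1, Finset.mem_union_right _ hR2, ?_⟩
      intro l hl
      rw [Finset.mem_union] at hl
      rcases hl with hl | hl
      · have := hL3 l hl; rw [Finset.mem_Icc] at *; omega
      · have := hR3 l hl; rw [Finset.mem_Icc] at *; omega

lemma seg_subset_outSet (p : ℕ → E2) (Q : Finset ℕ) {a b : ℕ}
    (ha : a ∈ Q) (hb : b ∈ Q) (hab : a < b) (hcons : ∀ l ∈ Q, l ≤ a ∨ b ≤ l) :
    segment ℝ (p a) (p b) ⊆ outSet p Q := by
  intro x hx
  simp only [outSet, mem_iUnion]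
  exact ⟨a, ha, b, hb, hab, hcons, hx⟩

lemma dp_main (p : ℕ → E2) (ε : ℝ) (hε : 0 ≤ ε) :
    ∀ fuel i j, i < j → j - i ≤ fuel → ∀ Q : Finset ℕ, dp p ε fuel i j ⊆ Q →
      (∀ l ∈ Q, i ≤ l → l ≤ j → l ∈ dp p ε fuel i j) →
      ∀ m, i ≤ m → m ≤ j → Metric.infDist (p m) (outSet p Q) ≤ ε := by
  intro fuel
  induction fuel with
  | zero => intro i j hij hf; omega
  | succ fuel ih =>
    intro i j hij hfuel Q hQ1 hQ2 m hm1 hm2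
    rw [dp] at hQ1 hQ2
    split_ifs at hQ1 hQ2 with h
    · -- base case: dp = {i,j}
      have hseg : segment ℝ (p i) (p j) ⊆ outSet p Q := by
        refine seg_subset_outSet p Q (hQ1 (by simp)) (hQ1 (by simp)) hij ?_
        intro l hl
        by_contra hc
        push_neg at hc
        have := hQ2 l hl (by omega) (by omega)
        simp at this
        omega
      have hd : Metric.infDist (p m) (segment ℝ (p i) (p j)) ≤ ε := by
        rcases h with h | h
        · exact h m (Finset.mem_Icc.mpr ⟨hm1, hm2⟩)
        · have : m = i ∨ m = j := by
            by_contra hc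
            push_neg at hc
            exact h ⟨m, Finset.mem_Ioo.mpr ⟨by omega, by omega⟩⟩
          rcases this with rfl | rfl
          · rw [Metric.infDist_zero_of_mem (left_mem_segment ℝ _ _)]; exact hε
          · rw [Metric.infDist_zero_of_mem (right_mem_segment ℝ _ _)]; exact hε
      calc Metric.infDist (p m) (outSet p Q)
          ≤ Metric.infDist (p m) (segment ℝ (p i) (p j)) :=
            Metric.infDist_le_infDist_of_subset hseg ⟨_, left_mem_segment ℝ _ _⟩
        _ ≤ ε := hd
    · set f := Classical.choose (Finset.exists_max_image (Finset.Ioo i j)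
        (fun m => Metric.infDist (p m) (segment ℝ (p i) (p j)))
        (not_not.mp (not_or.mp h).2)) with hf
      have hspec := Classical.choose_spec (Finset.exists_max_image (Finset.Ioo i j)
        (fun m => Metric.infDist (p m) (segment ℝ (p i) (p j)))
        (not_not.mp (not_or.mp h).2))
      rw [← hf] at hspec
      have hfm : i < f ∧ f < j := Finset.mem_Ioo.mp hspec.1
      obtain ⟨hL1, hL2, hL3⟩ := dp_struct p ε fuel i f (le_of_lt hfm.1)
      obtain ⟨hR1, hR2, hR3⟩ := dp_struct p ε fuel f j (le_of_lt hfm.2)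
      have hQL : dp p ε fuel i f ⊆ Q := fun x hx => hQ1 (Finset.mem_union_left _ hx)
      have hQR : dp p ε fuel f j ⊆ Q := fun x hx => hQ1 (Finset.mem_union_right _ hx)
      have hQ2L : ∀ l ∈ Q, i ≤ l → l ≤ f → l ∈ dp p ε fuel i f := by
        intro l hl h1 h2
        have := hQ2 l hl h1 (by omega)
        rcases Finset.mem_union.mp this with hl' | hl'
        · exact hl'
        · have := Finset.mem_Icc.mp (hR3 l hl')
          have : l = f := by omega
          subst this; exact hL2
      have hQ2R : ∀ l ∈ Q, f ≤ l → l ≤ j → l ∈ dp p ε fuel f j := by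
        intro l hl h1 h2
        have := hQ2 l hl (by omega) h2
        rcases Finset.mem_union.mp this with hl' | hl'
        · have := Finset.mem_Icc.mp (hL3 l hl')
          have : l = f := by omega
          subst this; exact hR1
        · exact hl'
      rcases le_or_gt m f with hmf | hmf
      · exact ih i f hfm.1 (by omega) Q hQL hQ2L m hm1 hmf
      · exact ih f j hfm.2 (by omega) Q hQR hQ2R m (le_of_lt hmf) hm2

/-- Douglas–Peucker correctness (vertex version): every vertex of the input
polyline `p 0, …, p n` lies within distance `ε` of the output polyline of the
Douglas–Peucker simplification. -/
theorem stmt_13 (p : ℕ → E2) (n : ℕ) (hn : 1 ≤ n) (ε : ℝ) (hε : 0 ≤ ε) :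
    ∀ m ≤ n, Metric.infDist (p m) (outSet p (dp p ε n 0 n)) ≤ ε := by
  intro m hm
  exact dp_main p ε hε n 0 n (by omega) (by omega) _ (le_refl _)
    (fun l hl _ _ => hl) m (Nat.zero_le m) hm
end

section
/- Douglas–Peucker full Hausdorff correctness: with the Douglas–Peucker simplification as defined (recursively splitting at a farthest vertex until all intermediate vertices are within ε of the spanning segment), every point of the input polyline (all points on all segments p_ip_{i+1}, not only vertices) lies within distance ε of the output polyline, and every point of the output polyline lies on the input polyline or within distance ε of it; hence the undirected Hausdorff distance between input and output polylines is at most ε. -/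
/-! Between two consecutive selected indices `a < b` the recursion guarantees that every vertex
`p m`, `a ≤ m ≤ b`, is within `ε` of the segment `p a p b`. The closed `ε`-neighbourhood of
a segment is convex, so the whole input chain from `p a` to `p b` lies within `ε` of that
segment. Conversely, by the intermediate value theorem for `⟪p b - p a, ·⟫` along that chain,
every point `x` of the segment is the orthogonal projection onto it of some point `y` of the
chain, and then `dist x y ≤ infDist y (segment) ≤ ε`. -/

open Set

open Metric

section Normed

variable {E : Type*} [NormedAddCommGroup E] [NormedSpace ℝ E]

theorem infDist_le_of_mem_segment {S : Set E} (hS : Convex ℝ S) (hne : S.Nonempty)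
    {u v x : E} {ε : ℝ} (hu : infDist u S ≤ ε) (hv : infDist v S ≤ ε)
    (hx : x ∈ segment ℝ u v) : infDist x S ≤ ε := by
  have hε : 0 ≤ ε := infDist_nonneg.trans hu
  have mem_iff (y : E) : y ∈ cthickening ε S ↔ infDist y S ≤ ε := by
    rw [mem_cthickening_iff, ENNReal.le_ofReal_iff_toReal_le (infEDist_ne_top hne) hε]; rfl
  exact (mem_iff x).1 <|
    (hS.cthickening ε).segment_subset ((mem_iff u).2 hu) ((mem_iff v).2 hv) hx

end Normed

section Polyline

variable {V : Type*} [AddCommGroup V] [Module ℝ V]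

theorem exists_mem_segment_apply_eq (p : ℕ → V) (g : V →ᵃ[ℝ] ℝ) {a b : ℕ}
    (hab : a < b) {c : ℝ} (ha : g (p a) ≤ c) (hb : c ≤ g (p b)) :
    ∃ m, a ≤ m ∧ m < b ∧ ∃ y ∈ segment ℝ (p m) (p (m + 1)), g y = c := by
  have step {m : ℕ} (h₁ : g (p m) ≤ c) (h₂ : c ≤ g (p (m + 1))) :
      ∃ y ∈ segment ℝ (p m) (p (m + 1)), g y = c := by
    rw [← mem_image, image_segment, segment_eq_uIcc]
    exact mem_uIcc_of_le h₁ h₂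
  induction b, hab using Nat.le_induction with
  | base => exact ⟨a, le_rfl, a.lt_succ_self, step ha hb⟩
  | succ b hab ih =>
    by_cases hc : c ≤ g (p b)
    · obtain ⟨m, ham, hmb, hm⟩ := ih hc
      exact ⟨m, ham, hmb.trans b.lt_succ_self, hm⟩
    · exact ⟨b, by omega, b.lt_succ_self, step (le_of_not_ge hc) hb⟩

end Polyline

section InnerProduct

variable {F : Type*} [NormedAddCommGroup F] [InnerProductSpace ℝ F]

theorem dist_le_infDist_segment_of_inner_eq_zero {u w x y : F} (hx : x ∈ segment ℝ u w)
    (h : inner ℝ (w - u) (y - x) = 0) : dist y x ≤ infDist y (segment ℝ u w) := by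
  refine (le_infDist ⟨u, left_mem_segment ℝ u w⟩).2 fun z hz => ?_
  rw [segment_eq_image'] at hx hz
  obtain ⟨t, -, rfl⟩ := hx
  obtain ⟨s, -, rfl⟩ := hz
  have horth : inner ℝ (y - (u + t • (w - u))) ((s - t) • (w - u)) = 0 := by
    rw [real_inner_smul_right, real_inner_comm, h, mul_zero]
  have hpyth := norm_sub_sq_eq_norm_sq_add_norm_sq_real horth
  rw [show y - (u + t • (w - u)) - (s - t) • (w - u) = y - (u + s • (w - u)) by module]
    at hpyth
  dsimp only
  rw [dist_eq_norm, dist_eq_norm, mul_self_le_mul_self_iff (norm_nonneg _) (norm_nonneg _), hpyth]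
  exact le_add_of_nonneg_right (mul_self_nonneg _)

theorem exists_dist_le_of_mem_segment (p : ℕ → F) {a b : ℕ} (hab : a < b) {ε : ℝ}
    (hclose : ∀ m ∈ Finset.Icc a b, infDist (p m) (segment ℝ (p a) (p b)) ≤ ε)
    {x : F} (hx : x ∈ segment ℝ (p a) (p b)) :
    ∃ m, a ≤ m ∧ m < b ∧ ∃ y ∈ segment ℝ (p m) (p (m + 1)), dist y x ≤ ε := by
  let g : F →ᵃ[ℝ] ℝ := (innerₛₗ ℝ (p b - p a)).toAffineMap
  have hg (y z : F) : g y - g z = inner ℝ (p b - p a) (y - z) := (inner_sub_right ..).symm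
  have hgab : g (p a) ≤ g (p b) := by
    rw [← sub_nonneg, hg]; exact real_inner_self_nonneg
  have hgx : g x ∈ Icc (g (p a)) (g (p b)) := by
    rw [← segment_eq_Icc hgab, ← image_segment]; exact mem_image_of_mem g hx
  obtain ⟨m, ham, hmb, y, hy, hgy⟩ := exists_mem_segment_apply_eq p g hab hgx.1 hgx.2
  refine ⟨m, ham, hmb, y, hy, ?_⟩
  calc dist y x ≤ infDist y (segment ℝ (p a) (p b)) :=
        dist_le_infDist_segment_of_inner_eq_zero hx (by rw [← hg, hgy, sub_self])
    _ ≤ ε := infDist_le_of_mem_segment (convex_segment _ _) ⟨_, left_mem_segment ℝ _ _⟩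
        (hclose m (Finset.mem_Icc.2 ⟨ham, hmb.le⟩))
        (hclose (m + 1) (Finset.mem_Icc.2 ⟨by omega, hmb⟩)) hy

end InnerProduct

structure IsConsecutive (Q : Finset ℕ) (a b : ℕ) : Prop where
  left_mem : a ∈ Q
  right_mem : b ∈ Q
  lt : a < b
  le_or_le : ∀ l ∈ Q, l ≤ a ∨ b ≤ l

theorem IsConsecutive.mono {Q Q' : Finset ℕ} {a b : ℕ} (h : IsConsecutive Q a b)
    (hQ : Q' ⊆ Q) (ha : a ∈ Q') (hb : b ∈ Q') : IsConsecutive Q' a b :=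
  ⟨ha, hb, h.lt, fun l hl => h.le_or_le l (hQ hl)⟩

theorem exists_isConsecutive_of_mem {Q : Finset ℕ} {a b i : ℕ} (ha : a ∈ Q) (hb : b ∈ Q)
    (hai : a ≤ i) (hib : i < b) : ∃ a' b', IsConsecutive Q a' b' ∧ a' ≤ i ∧ i < b' := by
  have hlo : (Q.filter (· ≤ i)).Nonempty := ⟨a, Finset.mem_filter.2 ⟨ha, hai⟩⟩
  have hhi : (Q.filter (i < ·)).Nonempty := ⟨b, Finset.mem_filter.2 ⟨hb, hib⟩⟩
  obtain ⟨hloQ, hlo_le⟩ := Finset.mem_filter.1 ((Q.filter (· ≤ i)).max'_mem hlo)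
  obtain ⟨hhiQ, hhi_lt⟩ := Finset.mem_filter.1 ((Q.filter (i < ·)).min'_mem hhi)
  refine ⟨_, _, ⟨hloQ, hhiQ, by omega, fun l hl => ?_⟩, hlo_le, hhi_lt⟩
  rcases le_or_gt l i with hli | hil
  · exact .inl (Finset.le_max' _ l (Finset.mem_filter.2 ⟨hl, hli⟩))
  · exact .inr (Finset.min'_le _ l (Finset.mem_filter.2 ⟨hl, hil⟩))

section Simplification

variable {E : Type*} [NormedAddCommGroup E] [NormedSpace ℝ E]

structure IsSimplification (p : ℕ → E) (ε : ℝ) (Q : Finset ℕ) (i j : ℕ) : Prop where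
  left_mem : i ∈ Q
  right_mem : j ∈ Q
  subset_Icc : Q ⊆ Finset.Icc i j
  infDist_le : ∀ a b, IsConsecutive Q a b →
    ∀ m ∈ Finset.Icc a b, infDist (p m) (segment ℝ (p a) (p b)) ≤ ε

variable {p : ℕ → E} {ε : ℝ}

theorem isSimplification_pair {i j : ℕ} (hij : i ≤ j)
    (h : ∀ m ∈ Finset.Icc i j, infDist (p m) (segment ℝ (p i) (p j)) ≤ ε) :
    IsSimplification p ε {i, j} i j where
  left_mem := by simp
  right_mem := by simp
  subset_Icc := by
    intro l hl
    rcases Finset.mem_insert.1 hl with rfl | hl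
    · exact Finset.mem_Icc.2 ⟨le_rfl, hij⟩
    · rw [Finset.mem_singleton.1 hl]; exact Finset.mem_Icc.2 ⟨hij, le_rfl⟩
  infDist_le a b := by
    rintro ⟨ha, hb, hab, -⟩
    simp only [Finset.mem_insert, Finset.mem_singleton] at ha hb
    obtain ⟨rfl, rfl⟩ : a = i ∧ b = j := by omega
    exact h

theorem infDist_le_of_not_nonempty_Ioo (hε : 0 ≤ ε) {i j : ℕ}
    (h : ¬(Finset.Ioo i j).Nonempty) :
    ∀ m ∈ Finset.Icc i j, infDist (p m) (segment ℝ (p i) (p j)) ≤ ε := by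
  intro m hm
  have hm' : m = i ∨ m = j := by
    by_contra! hne
    exact h ⟨m, Finset.mem_Ioo.2 (by rw [Finset.mem_Icc] at hm; omega)⟩
  rcases hm' with rfl | rfl
  · rw [infDist_zero_of_mem (left_mem_segment ℝ _ _)]; exact hε
  · rw [infDist_zero_of_mem (right_mem_segment ℝ _ _)]; exact hε

theorem IsSimplification.union {Q₁ Q₂ : Finset ℕ} {i f j : ℕ}
    (h₁ : IsSimplification p ε Q₁ i f) (h₂ : IsSimplification p ε Q₂ f j) :
    IsSimplification p ε (Q₁ ∪ Q₂) i j := by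
  have le₁ {l} (hl : l ∈ Q₁) : i ≤ l ∧ l ≤ f := Finset.mem_Icc.1 (h₁.subset_Icc hl)
  have le₂ {l} (hl : l ∈ Q₂) : f ≤ l ∧ l ≤ j := Finset.mem_Icc.1 (h₂.subset_Icc hl)
  have hif := le₁ h₁.right_mem
  have hfj := le₂ h₂.left_mem
  refine ⟨Finset.mem_union_left _ h₁.left_mem, Finset.mem_union_right _ h₂.right_mem,
    ?_, ?_⟩
  · intro l hl
    rcases Finset.mem_union.1 hl with hl | hl
    · have := le₁ hl; exact Finset.mem_Icc.2 ⟨this.1, by omega⟩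
    · have := le₂ hl; exact Finset.mem_Icc.2 ⟨by omega, this.2⟩
  · have mem₁ {l} (hl : l ∈ Q₁ ∪ Q₂) (hlf : l ≤ f) : l ∈ Q₁ := by
      rcases Finset.mem_union.1 hl with hl | hl
      · exact hl
      · obtain rfl : l = f := by have := le₂ hl; omega
        exact h₁.right_mem
    have mem₂ {l} (hl : l ∈ Q₁ ∪ Q₂) (hfl : f ≤ l) : l ∈ Q₂ := by
      rcases Finset.mem_union.1 hl with hl | hl
      · obtain rfl : l = f := by have := le₁ hl; omega
        exact h₂.left_mem
      · exact hl
    intro a b hab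
    have hlt := hab.lt
    rcases hab.le_or_le f (Finset.mem_union_left _ h₁.right_mem) with hfa | hbf
    · exact h₂.infDist_le a b <| hab.mono Finset.subset_union_right
        (mem₂ hab.left_mem hfa) (mem₂ hab.right_mem (by omega))
    · exact h₁.infDist_le a b <| hab.mono Finset.subset_union_left
        (mem₁ hab.left_mem (by omega)) (mem₁ hab.right_mem hbf)

end Simplification

theorem isSimplification_dp (p : ℕ → E2) {ε : ℝ} (hε : 0 ≤ ε) :
    ∀ fuel i j, i ≤ j → j - i ≤ fuel → IsSimplification p ε (dp p ε fuel i j) i j := by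
  intro fuel
  induction fuel with
  | zero =>
    intro i j hij hfuel
    exact isSimplification_pair hij (infDist_le_of_not_nonempty_Ioo hε fun ⟨m, hm⟩ => by
      rw [Finset.mem_Ioo] at hm; omega)
  | succ fuel ih =>
    intro i j hij hfuel
    rw [dp]
    split_ifs with h
    · exact isSimplification_pair hij (h.elim id (infDist_le_of_not_nonempty_Ioo hε))
    · generalize_proofs hex
      -- only `f ∈ Ioo i j` matters here, not that `p f` is farthest from the segment
      obtain ⟨hf, -⟩ := Classical.choose_spec hex
      rw [Finset.mem_Ioo] at hf
      exact (ih _ _ hf.1.le (by omega)).union (ih _ _ hf.2.le (by omega))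

theorem mem_outSet_iff {p : ℕ → E2} {Q : Finset ℕ} {x : E2} :
    x ∈ outSet p Q ↔ ∃ a b, IsConsecutive Q a b ∧ x ∈ segment ℝ (p a) (p b) := by
  simp only [outSet, mem_iUnion, mem_ofPred_eq]
  constructor
  · rintro ⟨a, ha, b, hb, hab, hle, hx⟩
    exact ⟨a, b, ⟨ha, hb, hab, hle⟩, hx⟩
  · rintro ⟨a, b, ⟨ha, hb, hab, hle⟩, hx⟩
    exact ⟨a, ha, b, hb, hab, hle, hx⟩

theorem mem_inSet_iff {p : ℕ → E2} {n : ℕ} {x : E2} :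
    x ∈ inSet p n ↔ ∃ i < n, x ∈ segment ℝ (p i) (p (i + 1)) := by
  simp [inSet]

theorem stmt_14_general (p : ℕ → E2) (n : ℕ) (ε : ℝ) (hε : 0 ≤ ε) :
    (∀ x ∈ inSet p n, Metric.infDist x (outSet p (dp p ε n 0 n)) ≤ ε) ∧
    (∀ x ∈ outSet p (dp p ε n 0 n), Metric.infDist x (inSet p n) ≤ ε) := by
  have hQ := isSimplification_dp p hε n 0 n n.zero_le (by omega)
  refine ⟨fun x hx => ?_, fun x hx => ?_⟩
  · obtain ⟨i, hin, hx⟩ := mem_inSet_iff.1 hx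
    obtain ⟨a, b, hab, hai, hib⟩ :=
      exists_isConsecutive_of_mem hQ.left_mem hQ.right_mem i.zero_le hin
    have hclose := hQ.infDist_le a b hab
    calc infDist x (outSet p (dp p ε n 0 n)) ≤ infDist x (segment ℝ (p a) (p b)) :=
          infDist_le_infDist_of_subset (fun y hy => mem_outSet_iff.2 ⟨a, b, hab, hy⟩)
            ⟨_, left_mem_segment ℝ _ _⟩
      _ ≤ ε := infDist_le_of_mem_segment (convex_segment _ _) ⟨_, left_mem_segment ℝ _ _⟩
          (hclose i (Finset.mem_Icc.2 ⟨hai, hib.le⟩))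
          (hclose (i + 1) (Finset.mem_Icc.2 ⟨by omega, hib⟩)) hx
  · obtain ⟨a, b, hab, hx⟩ := mem_outSet_iff.1 hx
    obtain ⟨m, -, hmb, y, hy, hyx⟩ :=
      exists_dist_le_of_mem_segment p hab.lt (hQ.infDist_le a b hab) hx
    have hbn := (Finset.mem_Icc.1 (hQ.subset_Icc hab.right_mem)).2
    calc infDist x (inSet p n) ≤ dist x y :=
          infDist_le_dist_of_mem (mem_inSet_iff.2 ⟨m, by omega, hy⟩)
      _ ≤ ε := (dist_comm x y).le.trans hyx

/-- Douglas–Peucker full Hausdorff correctness: every point of the input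
polyline is within `ε` of the output polyline, and every point of the output
polyline is within `ε` of the input polyline; hence the undirected Hausdorff
distance between input and output is at most `ε`. -/
theorem stmt_14 (p : ℕ → E2) (n : ℕ) (hn : 1 ≤ n) (ε : ℝ) (hε : 0 ≤ ε) :
    (∀ x ∈ inSet p n, Metric.infDist x (outSet p (dp p ε n 0 n)) ≤ ε) ∧
    (∀ x ∈ outSet p (dp p ε n 0 n), Metric.infDist x (inSet p n) ≤ ε) :=
  stmt_14_general p n ε hε
end

section
/- Lower bound instance for Hausdorff simplification of a 7-vertex polyline: there exist seven points p₁,…,p₇ ∈ ℝ² and ε > 0 such that (i) the directed Hausdorff distance from the polyline ⟨p₁,…,p₇⟩ to the polyline ⟨p₁, p₅, p₆, p₇⟩ is at most ε, while (ii) for every j with 1 < j < 7, some vertex among p₁,…,p₇ has distance greater than ε to the two-segment polyline ⟨p₁, p_j, p₇⟩ (so no 3-vertex subsequence simplification achieves directed Hausdorff error ε), hence the optimal Hausdorff simplification has exactly 4 vertices. -/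
open Set

/-- The polyline through the points `q 0, …, q m` (union of its segments). -/
def polylineSet (m : ℕ) (q : ℕ → E2) : Set E2 :=
  ⋃ i ∈ Finset.range m, segment ℝ (q i) (q (i + 1))

/-!
Take the vertices `(0,0), (1,0), (2,0), (3,0), (4,0), (6,4), (0,4)` and `ε = 1`. The first five
are collinear and in order along `[p₀, p₄]`, so the polyline lies inside `⟨p₀, p₄, p₅, p₆⟩`.
For each three-vertex candidate `⟨p₀, pⱼ, p₆⟩`, one of `p₄`, `p₅` is at distance at least `2`
from both segments, witnessed on each segment by a rational vector `u` with `‖u‖ ≤ 1` and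
`2 ≤ ⟪u, y - x⟫` at its two endpoints: this linear bound passes to the whole segment, and
`⟪u, y - x⟫ ≤ ‖y - x‖`.
-/

open Metric RealInnerProductSpace

section InnerProductSpace

variable {F : Type*} [NormedAddCommGroup F] [InnerProductSpace ℝ F]

theorem le_infDist_segment_of_le_inner {x a b u : F} {r : ℝ} (hu : ‖u‖ ≤ 1)
    (ha : r ≤ ⟪u, a - x⟫) (hb : r ≤ ⟪u, b - x⟫) : r ≤ infDist x (segment ℝ a b) := by
  rw [le_infDist ⟨a, left_mem_segment ℝ a b⟩]
  rintro _ ⟨s, t, hs, ht, hst, rfl⟩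
  have hcomb : s • a + t • b - x = s • (a - x) + t • (b - x) := by
    rw [smul_sub, smul_sub, sub_add_sub_comm, ← add_smul, hst, one_smul]
  calc r = s * r + t * r := by rw [← add_mul, hst, one_mul]
    _ ≤ s * ⟪u, a - x⟫ + t * ⟪u, b - x⟫ := by gcongr
    _ = ⟪u, s • a + t • b - x⟫ := by rw [hcomb, inner_add_right, inner_smul_right, inner_smul_right]
    _ ≤ ‖u‖ * ‖s • a + t • b - x‖ := real_inner_le_norm _ _
    _ ≤ ‖s • a + t • b - x‖ := mul_le_of_le_one_left (norm_nonneg _) hu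
    _ = dist x (s • a + t • b) := by rw [dist_comm, dist_eq_norm]

theorem le_infDist_union {α : Type*} [PseudoMetricSpace α] {x : α} {s t : Set α} {r : ℝ}
    (hs : s.Nonempty) (ht : t.Nonempty) (hrs : r ≤ infDist x s) (hrt : r ≤ infDist x t) :
    r ≤ infDist x (s ∪ t) := by
  rw [le_infDist (hs.mono subset_union_left)]
  rintro y (hy | hy)
  · exact (le_infDist hs).1 hrs hy
  · exact (le_infDist ht).1 hrt hy

theorem le_infDist_segment_union_segment_of_le_inner {x a b c u v : F} {r : ℝ}
    (hu : ‖u‖ ≤ 1) (hv : ‖v‖ ≤ 1) (ha : r ≤ ⟪u, a - x⟫) (hb : r ≤ ⟪u, b - x⟫)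
    (hb' : r ≤ ⟪v, b - x⟫) (hc : r ≤ ⟪v, c - x⟫) :
    r ≤ infDist x (segment ℝ a b ∪ segment ℝ b c) :=
  le_infDist_union ⟨a, left_mem_segment ℝ a b⟩ ⟨b, left_mem_segment ℝ b c⟩
    (le_infDist_segment_of_le_inner hu ha hb) (le_infDist_segment_of_le_inner hv hb' hc)

end InnerProductSpace

@[simp]
theorem inner_vecTwo (a b c d : ℝ) : ⟪!₂[a, b], !₂[c, d]⟫ = a * c + b * d := by
  simp [EuclideanSpace.inner_eq_star_dotProduct, Fin.sum_univ_two, dotProduct, mul_comm]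

@[simp]
theorem norm_vecTwo (a b : ℝ) : ‖!₂[a, b]‖ = √(a ^ 2 + b ^ 2) := by
  simp [EuclideanSpace.norm_eq, Fin.sum_univ_two]

@[simp]
theorem vecTwo_sub (a b c d : ℝ) : !₂[a, b] - !₂[c, d] = !₂[a - c, b - d] := by
  ext i; fin_cases i <;> simp

noncomputable def lowerBoundVertices : ℕ → E2
  | 0 => !₂[0, 0]
  | 1 => !₂[1, 0]
  | 2 => !₂[2, 0]
  | 3 => !₂[3, 0]
  | 4 => !₂[4, 0]
  | 5 => !₂[6, 4]
  | _ => !₂[0, 4]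

theorem lowerBoundVertices_mem_segment {k : ℕ} (hk : k ≤ 4) :
    lowerBoundVertices k ∈ segment ℝ (lowerBoundVertices 0) (lowerBoundVertices 4) := by
  have hk' : (k : ℝ) ≤ 4 := by exact_mod_cast hk
  refine ⟨1 - k / 4, k / 4, by linarith, by positivity, by ring, ?_⟩
  ext i
  interval_cases k <;> fin_cases i <;> simp [lowerBoundVertices]

theorem polylineSet_lowerBoundVertices_subset :
    polylineSet 6 lowerBoundVertices ⊆
      segment ℝ (lowerBoundVertices 0) (lowerBoundVertices 4) ∪
        segment ℝ (lowerBoundVertices 4) (lowerBoundVertices 5) ∪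
          segment ℝ (lowerBoundVertices 5) (lowerBoundVertices 6) := by
  refine iUnion₂_subset fun i hi => ?_
  obtain hi | rfl | rfl : i < 4 ∨ i = 4 ∨ i = 5 := by have := Finset.mem_range.1 hi; omega
  · exact ((convex_segment _ _).segment_subset (lowerBoundVertices_mem_segment hi.le)
      (lowerBoundVertices_mem_segment hi)).trans (subset_union_left.trans subset_union_left)
  · exact subset_union_right.trans subset_union_left
  · exact subset_union_right

/-- Lower bound instance for Hausdorff simplification: there is a 7-vertex
polyline `⟨p 0, …, p 6⟩` and `ε > 0` such that the directed Hausdorff distance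
from it to `⟨p 0, p 4, p 5, p 6⟩` is at most `ε`, while no simplification
`⟨p 0, p j, p 6⟩` on three vertices is within directed Hausdorff distance `ε`
(some input vertex is farther than `ε` from it). Hence the optimal Hausdorff
simplification has exactly 4 vertices. -/
theorem stmt_17 :
    ∃ (p : ℕ → E2) (ε : ℝ), 0 < ε ∧
      (∀ x ∈ polylineSet 6 p,
        Metric.infDist x
          (segment ℝ (p 0) (p 4) ∪ segment ℝ (p 4) (p 5) ∪
            segment ℝ (p 5) (p 6)) ≤ ε) ∧
      (∀ j, 0 < j → j < 6 →
        ∃ m ≤ 6, Metric.infDist (p m)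
          (segment ℝ (p 0) (p j) ∪ segment ℝ (p j) (p 6)) > ε) := by
  set p := lowerBoundVertices
  refine ⟨p, 1, one_pos, fun x hx => ?_, fun j hj0 hj6 => ?_⟩
  · rw [infDist_zero_of_mem (polylineSet_lowerBoundVertices_subset hx)]
    exact zero_le_one
  · suffices ∃ m ≤ 6, 2 ≤ infDist (p m) (segment ℝ (p 0) (p j) ∪ segment ℝ (p j) (p 6)) by
      obtain ⟨m, hm, h⟩ := this
      exact ⟨m, hm, by linarith⟩
    interval_cases j
    · refine ⟨4, by norm_num, le_infDist_segment_union_segment_of_le_inner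
        (u := !₂[-1, 0]) (v := !₂[-1, 0]) ?_ ?_ ?_ ?_ ?_ ?_⟩ <;> norm_num [p, lowerBoundVertices]
    · refine ⟨4, by norm_num, le_infDist_segment_union_segment_of_le_inner
        (u := !₂[-1, 0]) (v := !₂[-1, 0]) ?_ ?_ ?_ ?_ ?_ ?_⟩ <;> norm_num [p, lowerBoundVertices]
    · refine ⟨5, by norm_num, le_infDist_segment_union_segment_of_le_inner
        (u := !₂[-3/5, -4/5]) (v := !₂[-3/5, -4/5]) ?_ ?_ ?_ ?_ ?_ ?_⟩ <;>
        norm_num [p, lowerBoundVertices]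
    · refine ⟨5, by norm_num, le_infDist_segment_union_segment_of_le_inner
        (u := !₂[0, -1]) (v := !₂[-3/5, -4/5]) ?_ ?_ ?_ ?_ ?_ ?_⟩ <;>
        norm_num [p, lowerBoundVertices]
    · refine ⟨4, by norm_num, le_infDist_segment_union_segment_of_le_inner
        (u := !₂[-3/5, 4/5]) (v := !₂[0, 1]) ?_ ?_ ?_ ?_ ?_ ?_⟩ <;>
        norm_num [p, lowerBoundVertices]
end

section
/- Three-cluster obstruction: let A, B, C ⊂ ℝ² be three closed disks of radius ε/2 centered at the vertices of an equilateral triangle of side length L > 10ε. Let p₁, p₂, …, p_n alternate among the clusters so that consecutive vertices are always in different clusters (pattern A, B, C, B, A, B, C, …). Then for any i < j with j > i + 1, the segment p_ip_j has distance greater than ε to at least one intermediate vertex p_m (i < m < j); i.e., no 'shortcut' link is within distance ε of all skipped vertices. -/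
open Set

/-- The cluster center assigned to the `k`-th vertex in the alternating pattern
`a, b, c, b, a, b, c, b, …`. -/
noncomputable def clusterOf (a b c : E2) (k : ℕ) : E2 :=
  if k % 4 = 0 then a else if k % 2 = 1 then b else c

/-!
Moving a point and the two endpoints of a segment by at most `δ` each lowers their distance by
at most `2δ`, so it suffices to work with the cluster centers. For `i + 1 < j` some skipped vertex
lies in a cluster other than those of `p i` and `p j`. Its center is at distance `L` from both
endpoints of a center segment of length `0` or `L`, hence at distance at least `(√3 / 2) L > 5ε`
from it, which leaves more than `4ε` between the vertex itself and the link.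
-/

open Metric

section Segment

variable {E : Type*} [SeminormedAddCommGroup E] [NormedSpace ℝ E]

theorem exists_mem_segment_dist_le {x y x' y' z : E} {δ : ℝ} (hx : dist x x' ≤ δ)
    (hy : dist y y' ≤ δ) (hz : z ∈ segment ℝ x y) : ∃ z' ∈ segment ℝ x' y', dist z z' ≤ δ := by
  obtain ⟨s, t, hs, ht, hst, rfl⟩ := hz
  refine ⟨s • x' + t • y', ⟨s, t, hs, ht, hst, rfl⟩, ?_⟩
  calc dist (s • x + t • y) (s • x' + t • y')
      ≤ dist (s • x) (s • x') + dist (t • y) (t • y') := dist_add_add_le _ _ _ _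
    _ = s * dist x x' + t * dist y y' := by
      rw [dist_smul₀, dist_smul₀, Real.norm_of_nonneg hs, Real.norm_of_nonneg ht]
    _ ≤ s * δ + t * δ := by gcongr
    _ = δ := by rw [← add_mul, hst, one_mul]

theorem infDist_segment_sub_le {q q' x y x' y' : E} {δ : ℝ} (hq : dist q q' ≤ δ)
    (hx : dist x x' ≤ δ) (hy : dist y y' ≤ δ) :
    infDist q' (segment ℝ x' y') - 2 * δ ≤ infDist q (segment ℝ x y) := by
  refine (le_infDist ⟨x, left_mem_segment ℝ x y⟩).2 fun z hz ↦ ?_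
  obtain ⟨z', hz', hzz'⟩ := exists_mem_segment_dist_le hx hy hz
  have := (infDist_le_dist_of_mem hz' (x := q')).trans (dist_triangle4 q' q z z')
  linarith [dist_comm q q']

end Segment

theorem sqrt_three_div_two_mul_le_infDist_segment {F : Type*} [NormedAddCommGroup F]
    [InnerProductSpace ℝ F] {u v w : F} {L : ℝ} (hu : dist w u = L) (hv : dist w v = L)
    (huv : dist u v ≤ L) : √3 / 2 * L ≤ infDist w (segment ℝ u v) := by
  refine (le_infDist ⟨u, left_mem_segment ℝ u v⟩).2 ?_
  rintro _ ⟨s, t, hs, ht, hst, rfl⟩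
  rw [dist_eq_norm] at hu hv huv ⊢
  have hsplit : w - (s • u + t • v) = s • (w - u) + t • (w - v) := by
    calc w - (s • u + t • v) = (s + t) • w - (s • u + t • v) := by rw [hst, one_smul]
      _ = s • (w - u) + t • (w - v) := by module
  have hinner : 2 * inner ℝ (w - u) (w - v) = 2 * L ^ 2 - ‖u - v‖ ^ 2 := by
    have := norm_sub_sq_real (w - u) (w - v)
    rw [show w - u - (w - v) = v - u by abel, norm_sub_rev v u, hu, hv] at this
    linarith
  have hsq : ‖w - (s • u + t • v)‖ ^ 2 = L ^ 2 - s * t * ‖u - v‖ ^ 2 := by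
    rw [hsplit, norm_add_sq_real, real_inner_smul_left, real_inner_smul_right, norm_smul,
      norm_smul, Real.norm_of_nonneg hs, Real.norm_of_nonneg ht, hu, hv]
    linear_combination s * t * hinner + (s + t + 1) * L ^ 2 * hst
  have hL : 0 ≤ L := hu ▸ norm_nonneg _
  have hst4 : s * t ≤ 1 / 4 := by nlinarith [sq_nonneg (s - t)]
  have h34 : (√3 / 2 * L) ^ 2 ≤ ‖w - (s • u + t • v)‖ ^ 2 := by
    rw [hsq, mul_pow, div_pow, Real.sq_sqrt (by norm_num)]
    nlinarith [mul_le_mul huv huv (norm_nonneg _) hL, norm_nonneg (u - v), mul_nonneg hs ht]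
  exact (pow_le_pow_iff_left₀ (by positivity) (norm_nonneg _) two_ne_zero).1 h34

def clusterIdx (k : ℕ) : Fin 3 :=
  if k % 4 = 0 then 0 else if k % 2 = 1 then 1 else 2

theorem clusterOf_eq_clusterIdx (a b c : E2) (k : ℕ) :
    clusterOf a b c k = ![a, b, c] (clusterIdx k) := by
  unfold clusterOf clusterIdx
  split_ifs <;> rfl

theorem clusterIdx_eq_one_iff {k : ℕ} : clusterIdx k = 1 ↔ k % 2 = 1 := by
  unfold clusterIdx
  split_ifs <;> simp only [Fin.reduceEq, zero_ne_one, true_iff, false_iff] <;> omega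

theorem clusterIdx_add_two_ne {k : ℕ} (hk : k % 2 = 0) : clusterIdx (k + 2) ≠ clusterIdx k := by
  unfold clusterIdx
  split_ifs <;> first | decide | omega

theorem clusterIdx_ne_of_mod_two_ne {k l : ℕ} (h : k % 2 ≠ l % 2) :
    clusterIdx k ≠ clusterIdx l := by
  intro heq
  have hk := clusterIdx_eq_one_iff (k := k)
  rw [heq, clusterIdx_eq_one_iff] at hk
  omega

theorem exists_clusterIdx_ne {i j : ℕ} (hij : i + 1 < j) :
    ∃ m, i < m ∧ m < j ∧ clusterIdx m ≠ clusterIdx i ∧ clusterIdx m ≠ clusterIdx j := by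
  rcases Nat.mod_two_eq_zero_or_one i with hi | hi <;>
    rcases Nat.mod_two_eq_zero_or_one j with hj | hj
  · exact ⟨i + 1, by omega, hij, clusterIdx_ne_of_mod_two_ne (by omega),
      clusterIdx_ne_of_mod_two_ne (by omega)⟩
  · exact ⟨i + 2, by omega, by omega, clusterIdx_add_two_ne hi,
      clusterIdx_ne_of_mod_two_ne (by omega)⟩
  · refine ⟨j - 2, by omega, by omega, clusterIdx_ne_of_mod_two_ne (by omega), ?_⟩
    have h := clusterIdx_add_two_ne (k := j - 2) (by omega)
    rwa [Nat.sub_add_cancel (by omega : 2 ≤ j), ne_comm] at h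
  · exact ⟨i + 1, by omega, hij, clusterIdx_ne_of_mod_two_ne (by omega),
      clusterIdx_ne_of_mod_two_ne (by omega)⟩

/-- Three-cluster obstruction: if the vertices of a polyline alternate among
three clusters of radius `ε/2` centered at the vertices of an equilateral
triangle of side `L > 10ε`, then every shortcut link `p i p j` with `j > i + 1`
is at distance more than `ε` from some skipped vertex. -/
theorem stmt_18 (ε L : ℝ) (hε : 0 < ε) (hL : L > 10 * ε)
    (a b c : E2) (hab : ‖a - b‖ = L) (hbc : ‖b - c‖ = L) (hac : ‖a - c‖ = L)
    (p : ℕ → E2) (hp : ∀ k, ‖p k - clusterOf a b c k‖ ≤ ε / 2) :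
    ∀ i j : ℕ, i + 1 < j →
      ∃ m, i < m ∧ m < j ∧
        Metric.infDist (p m) (segment ℝ (p i) (p j)) > ε := by
  intro i j hij
  obtain ⟨m, him, hmj, hmi, hmj'⟩ := exists_clusterIdx_ne hij
  have hp' (k : ℕ) : dist (p k) (![a, b, c] (clusterIdx k)) ≤ ε / 2 := by
    rw [dist_eq_norm, ← clusterOf_eq_clusterIdx]; exact hp k
  set V : Fin 3 → E2 := ![a, b, c]
  have hside : ∀ x y : Fin 3, x ≠ y → dist (V x) (V y) = L := by
    simp only [dist_eq_norm]
    intro x y hxy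
    fin_cases x <;> fin_cases y <;> simp_all [V, norm_sub_rev]
  have hside_le (x y : Fin 3) : dist (V x) (V y) ≤ L := by
    rcases eq_or_ne x y with rfl | hxy
    · rw [dist_self]; linarith
    · exact (hside x y hxy).le
  have hcenter := sqrt_three_div_two_mul_le_infDist_segment (hside _ _ hmi) (hside _ _ hmj')
    (hside_le (clusterIdx i) (clusterIdx j))
  have hpert := infDist_segment_sub_le (hp' m) (hp' i) (hp' j)
  have hL_le : L ≤ √3 * L :=
    le_mul_of_one_le_left (by linarith) (Real.one_le_sqrt.2 (by norm_num))
  exact ⟨m, him, hmj, by linarith⟩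
end
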